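/- arXiv:2306.10784 — 5 statements merged into one kernel-verified Lean document; each statement's English description precedes it below -/
import Mathlib

section
/- Let D be a 4-Ore digraph obtained from a copy J of the bidirected K4 by successive Ore-compositions with 4-Ore digraphs, where the vertices and digons of J always remain on the digon side. Let [u,v] be a digon inside the subdigraph induced on V(J). Then in every 3-dicolouring of D with the digon [u,v] removed, the vertices of J receive pairwise distinct colours, except for u and v (which may share a colour). -/
/-- A (finite) digraph on vertices drawn from `ℕ`. -/
structure Dgr where
  verts : Finset ℕ
  Adj : ℕ → ℕ → Prop
  adj_mem : ∀ ⦃u v : ℕ⦄, Adj u v → u ∈ verts ∧ v ∈ verts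
  adj_irrefl : ∀ v, ¬ Adj v v

namespace Dgr

/-- number of vertices -/
def nV (D : Dgr) : ℕ := D.verts.card

/-- number of arcs -/
noncomputable def nA (D : Dgr) : ℕ := {p : ℕ × ℕ | D.Adj p.1 p.2}.ncard

/-- subdigraph relation -/
def Subd (H D : Dgr) : Prop := H.verts ⊆ D.verts ∧ ∀ ⦃u v : ℕ⦄, H.Adj u v → D.Adj u v

def ProperSubd (H D : Dgr) : Prop := Subd H D ∧ ¬ Subd D H

/-- a relation is acyclic: no directed cycle through any vertex -/
def Acy (R : ℕ → ℕ → Prop) : Prop := ∀ v, ¬ Relation.TransGen R v v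

/-- a `k`-dicolouring: each colour class induces an acyclic subdigraph -/
def IsDicol (D : Dgr) {k : ℕ} (φ : ℕ → Fin k) : Prop :=
  Acy (fun u v => D.Adj u v ∧ φ u = φ v)

def Dicolourable (D : Dgr) (k : ℕ) : Prop := ∃ φ : ℕ → Fin k, D.IsDicol φ

/-- the dichromatic number -/
noncomputable def dichr (D : Dgr) : ℕ := sInf {k | D.Dicolourable k}

/-- `k`-dicritical digraphs -/
def Dicritical (k : ℕ) (D : Dgr) : Prop :=
  D.dichr = k ∧ ∀ H : Dgr, ProperSubd H D → H.dichr < k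

def Bidirected (D : Dgr) : Prop := ∀ ⦃u v : ℕ⦄, D.Adj u v → D.Adj v u

def Oriented (D : Dgr) : Prop := ∀ ⦃u v : ℕ⦄, D.Adj u v → ¬ D.Adj v u

/-- being a bidirected complete digraph on `n` vertices -/
def IsBidirComplete (n : ℕ) (D : Dgr) : Prop :=
  D.verts.card = n ∧ ∀ u ∈ D.verts, ∀ v ∈ D.verts, u ≠ v → D.Adj u v

/-- a packing of digons (2-sets) and bidirected triangles (3-sets) -/
def IsPacking (D : Dgr) (P : Finset (Finset ℕ)) : Prop :=
  (∀ s ∈ P, (s.card = 2 ∨ s.card = 3) ∧ s ⊆ D.verts ∧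
      ∀ u ∈ s, ∀ v ∈ s, u ≠ v → D.Adj u v) ∧
  (P : Set (Finset ℕ)).Pairwise Disjoint

/-- `T(D)`: the maximum of `d + 2t` over packings of `d` digons and `t` bidirected
triangles; a digon contributes `card - 1 = 1`, a triangle `card - 1 = 2`. -/
noncomputable def TT (D : Dgr) : ℕ :=
  sSup {t | ∃ P : Finset (Finset ℕ), D.IsPacking P ∧ t = ∑ s ∈ P, (s.card - 1)}

/-- vertex deletion -/
def del (D : Dgr) (x : ℕ) : Dgr where
  verts := D.verts.erase x
  Adj u v := D.Adj u v ∧ u ≠ x ∧ v ≠ x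
  adj_mem := by
    intro u v h
    exact ⟨Finset.mem_erase.2 ⟨h.2.1, (D.adj_mem h.1).1⟩,
           Finset.mem_erase.2 ⟨h.2.2, (D.adj_mem h.1).2⟩⟩
  adj_irrefl := fun v h => D.adj_irrefl v h.1

/-- induced subdigraph on a set `S` of vertices -/
def induce (D : Dgr) (S : Finset ℕ) : Dgr where
  verts := D.verts ∩ S
  Adj u v := D.Adj u v ∧ u ∈ S ∧ v ∈ S
  adj_mem := by
    intro u v h
    exact ⟨Finset.mem_inter.2 ⟨(D.adj_mem h.1).1, h.2.1⟩,
           Finset.mem_inter.2 ⟨(D.adj_mem h.1).2, h.2.2⟩⟩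
  adj_irrefl := fun v h => D.adj_irrefl v h.1

/-- adding a digon between two (distinct, existing) vertices -/
def addDigon (D : Dgr) (x y : ℕ) : Dgr where
  verts := D.verts
  Adj u v := D.Adj u v ∨
    (x ≠ y ∧ x ∈ D.verts ∧ y ∈ D.verts ∧ ((u = x ∧ v = y) ∨ (u = y ∧ v = x)))
  adj_mem := by
    intro u v h
    rcases h with h | ⟨_, hx, hy, h | h⟩
    · exact D.adj_mem h
    · exact ⟨h.1 ▸ hx, h.2 ▸ hy⟩
    · exact ⟨h.1 ▸ hy, h.2 ▸ hx⟩
  adj_irrefl := by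
    intro v h
    rcases h with h | ⟨hxy, _, _, h | h⟩
    · exact D.adj_irrefl v h
    · exact hxy (h.1.symm.trans h.2)
    · exact hxy (h.2.symm.trans h.1)

/-- removing the digon `[x,y]` (both arcs) -/
def delDigon (D : Dgr) (x y : ℕ) : Dgr where
  verts := D.verts
  Adj u v := D.Adj u v ∧ ¬(u = x ∧ v = y) ∧ ¬(u = y ∧ v = x)
  adj_mem := by intro u v h; exact D.adj_mem h.1
  adj_irrefl := fun v h => D.adj_irrefl v h.1

/-- `D` is an Ore-composition of `D1` (digon side, replaced digon `[x,y]`) and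
`D2` (split side, split vertex `z`). -/
def IsOreComp (D1 D2 D : Dgr) : Prop :=
  Bidirected D1 ∧ Bidirected D2 ∧ Disjoint D1.verts D2.verts ∧
  ∃ (x y z : ℕ) (Z1 Z2 : Set ℕ),
    x ∈ D1.verts ∧ y ∈ D1.verts ∧ x ≠ y ∧ D1.Adj x y ∧
    z ∈ D2.verts ∧
    Z1 ∪ Z2 = {w | D2.Adj z w} ∧ Disjoint Z1 Z2 ∧ Z1.Nonempty ∧ Z2.Nonempty ∧
    D.verts = D1.verts ∪ D2.verts.erase z ∧
    (∀ u v, D.Adj u v ↔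
      (D1.Adj u v ∧ ¬(u = x ∧ v = y) ∧ ¬(u = y ∧ v = x)) ∨
      (D2.Adj u v ∧ u ≠ z ∧ v ≠ z) ∨
      (u = x ∧ v ∈ Z1 ∧ D2.Adj z v) ∨ (v = x ∧ u ∈ Z1 ∧ D2.Adj u z) ∨
      (u = y ∧ v ∈ Z2 ∧ D2.Adj z v) ∨ (v = y ∧ u ∈ Z2 ∧ D2.Adj u z))

/-- degree of a vertex: in-degree plus out-degree -/
noncomputable def deg (D : Dgr) (v : ℕ) : ℕ :=
  {u | D.Adj v u}.ncard + {u | D.Adj u v}.ncard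

end Dgr

open Dgr

/-- the class of 4-Ore digraphs -/
inductive IsOre4 : Dgr → Prop
  | k4 : ∀ D : Dgr, IsBidirComplete 4 D → IsOre4 D
  | comp : ∀ D1 D2 D : Dgr, IsOre4 D1 → IsOre4 D2 → IsOreComp D1 D2 D → IsOre4 D

namespace Dgr

/-- an emerald: a bidirected triangle all of whose vertices have degree 6 in `D` -/
def IsEmerald (D : Dgr) (s : Finset ℕ) : Prop :=
  s.card = 3 ∧ s ⊆ D.verts ∧ (∀ u ∈ s, ∀ v ∈ s, u ≠ v → D.Adj u v) ∧
  ∀ v ∈ s, D.deg v = 6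

/-- a diamond: a bidirected `K4` minus a digon `[x,y]`, the two other vertices
having degree 6 in `D` -/
def IsDiamond (D : Dgr) (s : Finset ℕ) : Prop :=
  s.card = 4 ∧ s ⊆ D.verts ∧ ∃ x ∈ s, ∃ y ∈ s, x ≠ y ∧
    (∀ u ∈ s, ∀ v ∈ s, u ≠ v → ¬(u = x ∧ v = y) → ¬(u = y ∧ v = x) → D.Adj u v) ∧
    (∀ v ∈ s, v ≠ x → v ≠ y → D.deg v = 6)

/-- boundary of an induced subdigraph given by its vertex set `S` -/
def bdry (D : Dgr) (S : Finset ℕ) : Set ℕ :=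
  {v | v ∈ S ∧ ∃ u ∈ D.verts, u ∉ S ∧ (D.Adj u v ∨ D.Adj v u)}

/-- Ore-collapsible induced subdigraph, given by its vertex set -/
def OreCollapsible (D : Dgr) (S : Finset ℕ) : Prop :=
  S ⊆ D.verts ∧ S.card < D.verts.card ∧
  ∃ u v : ℕ, u ≠ v ∧ D.bdry S = {u, v} ∧ IsOre4 ((D.induce S).addDigon u v)

/-- the potential of a digraph, with respect to parameters ε and δ -/
noncomputable def pot (D : Dgr) (ε δ : ℝ) : ℝ :=
  (10/3 + ε) * (D.nV : ℝ) - (D.nA : ℝ) - δ * (D.TT : ℝ)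

end Dgr

/-- `Ore4From J D`: `D` is obtained from `J` by successive Ore-compositions with
4-Ore digraphs, with `J` always on the digon side. -/
inductive Ore4From (J : Dgr) : Dgr → Prop
  | base : Ore4From J J
  | comp (D1 D2 D : Dgr) : Ore4From J D1 → IsOre4 D2 → Dgr.IsOreComp D1 D2 D →
      Ore4From J D

/-!
All digraphs in sight are bidirected, so a dicolouring of `D` minus the digon `[u,v]` is a
colouring in which every monochromatic arc joins `u` and `v`. Such a colouring of an
Ore-composition restricts to the digon side: if `x` and `y` had the same colour, giving `z`
that colour as well would properly 3-colour the split side, which is impossible for a 4-Ore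
digraph; so the replaced digon `[x,y]` is bichromatic. Descending to `J`, every arc of the
bidirected `K₄` other than `[u,v]` is bichromatic.
-/

namespace Dgr

def IsProperOutside (D : Dgr) (S : Set ℕ) {k : ℕ} (φ : ℕ → Fin k) : Prop :=
  ∀ ⦃p q : ℕ⦄, D.Adj p q → φ p = φ q → p ∈ S ∧ q ∈ S

theorem ne_of_adj (D : Dgr) {p q : ℕ} (h : D.Adj p q) : p ≠ q :=
  fun e => D.adj_irrefl q (e ▸ h)

theorem IsBidirComplete.bidirected {n : ℕ} {D : Dgr} (hD : IsBidirComplete n D) :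
    D.Bidirected := fun _ _ h =>
  hD.2 _ (D.adj_mem h).2 _ (D.adj_mem h).1 (D.ne_of_adj h).symm

theorem Bidirected.isProperOutside_of_isDicol_delDigon {D : Dgr} (hD : D.Bidirected)
    {u v : ℕ} {k : ℕ} {φ : ℕ → Fin k} (hφ : (D.delDigon u v).IsDicol φ) :
    D.IsProperOutside {u, v} φ := by
  intro p q hpq hmono
  by_contra hout
  have hpq_uv : ¬(p = u ∧ q = v) := by rintro ⟨rfl, rfl⟩; simp at hout
  have hqp_uv : ¬(p = v ∧ q = u) := by rintro ⟨rfl, rfl⟩; simp at hout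
  have hfwd : (D.delDigon u v).Adj p q := ⟨hpq, hpq_uv, hqp_uv⟩
  have hbwd : (D.delDigon u v).Adj q p :=
    ⟨hD hpq, fun ⟨h1, h2⟩ => hqp_uv ⟨h2, h1⟩, fun ⟨h1, h2⟩ => hpq_uv ⟨h2, h1⟩⟩
  exact hφ p (.head ⟨hfwd, hmono⟩ (.single ⟨hbwd, hmono.symm⟩))

namespace IsOreComp

variable {D1 D2 D : Dgr}

theorem bidirected (hOC : IsOreComp D1 D2 D) : D.Bidirected := by
  obtain ⟨hb1, hb2, -, x, y, z, Z1, Z2, -, -, -, -, -, -, -, -, -, -, hA⟩ := hOC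
  intro p q hpq
  rw [hA] at hpq ⊢
  rcases hpq with ⟨h, h1, h2⟩ | ⟨h, h1, h2⟩ | ⟨h1, h2, h3⟩ | ⟨h1, h2, h3⟩ | ⟨h1, h2, h3⟩ |
      ⟨h1, h2, h3⟩
  · exact .inl ⟨hb1 h, fun ⟨a, b⟩ => h2 ⟨b, a⟩, fun ⟨a, b⟩ => h1 ⟨b, a⟩⟩
  · exact .inr <| .inl ⟨hb2 h, h2, h1⟩
  · exact .inr <| .inr <| .inr <| .inl ⟨h1, h2, hb2 h3⟩
  · exact .inr <| .inr <| .inl ⟨h1, h2, hb2 h3⟩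
  · exact .inr <| .inr <| .inr <| .inr <| .inr ⟨h1, h2, hb2 h3⟩
  · exact .inr <| .inr <| .inr <| .inr <| .inl ⟨h1, h2, hb2 h3⟩

theorem isProperOutside_left (hOC : IsOreComp D1 D2 D) {k : ℕ}
    (h2 : ∀ ψ : ℕ → Fin k, ¬ D2.IsProperOutside ∅ ψ) {S : Set ℕ} (hS : S ⊆ D1.verts)
    {φ : ℕ → Fin k} (hφ : D.IsProperOutside S φ) : D1.IsProperOutside S φ := by
  obtain ⟨-, hb2, hdisj, x, y, z, Z1, Z2, -, -, -, -, -, hZ, -, -, -, -, hA⟩ := hOC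
  have hS2 : ∀ w ∈ D2.verts, w ∉ S := fun w hw hwS =>
    Finset.disjoint_left.1 hdisj (hS hwS) hw
  have hxy : φ x ≠ φ y := by
    intro hxy
    have hz : ∀ ⦃w⦄, D2.Adj z w → φ x ≠ φ w := by
      intro w hw hxw
      have hw' : w ∈ Z1 ∪ Z2 := hZ ▸ hw
      rcases hw' with hw1 | hw2
      · exact hS2 w (D2.adj_mem hw).2
          (hφ ((hA x w).2 (.inr <| .inr <| .inl ⟨rfl, hw1, hw⟩)) hxw).2
      · exact hS2 w (D2.adj_mem hw).2
          (hφ ((hA y w).2 (.inr <| .inr <| .inr <| .inr <| .inl ⟨rfl, hw2, hw⟩))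
            (hxy ▸ hxw)).2
    refine h2 (Function.update φ z (φ x)) fun p q hpq hmono => ?_
    by_cases hp : p = z
    · subst hp
      simp only [Function.update_self, Function.update_of_ne (D2.ne_of_adj hpq).symm] at hmono
      exact absurd hmono (hz hpq)
    by_cases hq : q = z
    · subst hq
      simp only [Function.update_self, Function.update_of_ne hp] at hmono
      exact absurd hmono.symm (hz (hb2 hpq))
    simp only [Function.update_of_ne hp, Function.update_of_ne hq] at hmono
    exact (hS2 p (D2.adj_mem hpq).1
      (hφ ((hA p q).2 (.inr <| .inl ⟨hpq, hp, hq⟩)) hmono).1).elim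
  intro p q hpq hmono
  refine hφ ((hA p q).2 (.inl ⟨hpq, ?_, ?_⟩)) hmono <;> rintro ⟨rfl, rfl⟩
  · exact hxy hmono
  · exact hxy hmono.symm

end IsOreComp

end Dgr

open Dgr

theorem IsOre4.not_isProperOutside_empty {D : Dgr} (hD : IsOre4 D) (φ : ℕ → Fin 3) :
    ¬ D.IsProperOutside ∅ φ := by
  induction hD generalizing φ with
  | k4 D hD =>
    intro hφ
    obtain ⟨p, hp, q, hq, hpq, hmono⟩ :=
      Finset.exists_ne_map_eq_of_card_lt_of_maps_to (s := D.verts) (t := Finset.univ) (f := φ)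
        (by simp [hD.1]) fun a _ => Finset.mem_univ (φ a)
    exact (hφ (hD.2 p hp q hq hpq) hmono).1
  | comp D1 D2 D _ _ hOC ih1 ih2 =>
    exact fun hφ => ih1 φ (hOC.isProperOutside_left ih2 (Set.empty_subset _) hφ)

namespace Ore4From

variable {J D : Dgr}

theorem verts_subset (h : Ore4From J D) : J.verts ⊆ D.verts := by
  induction h with
  | base => exact Finset.Subset.rfl
  | comp D1 D2 D _ _ hOC ih =>
    obtain ⟨-, -, -, -, -, _, -, -, -, -, -, -, -, -, -, -, -, hV, -⟩ := hOC
    exact hV ▸ ih.trans Finset.subset_union_left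

theorem bidirected (hJ : J.Bidirected) (h : Ore4From J D) : D.Bidirected := by
  cases h with
  | base => exact hJ
  | comp D1 D2 D _ _ hOC => exact hOC.bidirected

theorem isProperOutside (h : Ore4From J D) {S : Set ℕ} (hS : S ⊆ J.verts)
    {φ : ℕ → Fin 3} (hφ : D.IsProperOutside S φ) : J.IsProperOutside S φ := by
  induction h with
  | base => exact hφ
  | comp D1 D2 D h1 h2 hOC ih =>
    exact ih (hOC.isProperOutside_left h2.not_isProperOutside_empty
      (hS.trans h1.verts_subset) hφ)

end Ore4From

theorem stmt_10_general (J D : Dgr) (hJ : Dgr.IsBidirComplete 4 J) (h : Ore4From J D)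
    (u v : ℕ) (hu : u ∈ J.verts) (hv : v ∈ J.verts)
    (φ : ℕ → Fin 3) (hφ : (D.delDigon u v).IsDicol φ) :
    ∀ a ∈ J.verts, ∀ b ∈ J.verts, a ≠ b → φ a = φ b →
      ((a = u ∧ b = v) ∨ (a = v ∧ b = u)) := by
  intro a ha b hb hab hmono
  have hD : D.IsProperOutside {u, v} φ :=
    (h.bidirected hJ.bidirected).isProperOutside_of_isDicol_delDigon hφ
  have huvJ : ({u, v} : Set ℕ) ⊆ J.verts := Set.insert_subset hu (Set.singleton_subset_iff.2 hv)
  obtain ⟨ha', hb'⟩ := h.isProperOutside huvJ hD (hJ.2 a ha b hb hab) hmono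
  simp only [Set.mem_insert_iff, Set.mem_singleton_iff] at ha' hb'
  rcases ha' with rfl | rfl <;> rcases hb' with rfl | rfl <;> simp_all

/-- if `D` is obtained from a copy `J` of the bidirected `K4` by
successive Ore-compositions (with `J` on the digon side), and `[u,v]` is a digon
of `D` inside `V(J)`, then in any 3-dicolouring of `D` minus the digon `[u,v]`,
the vertices of `J` get pairwise distinct colours, except possibly `u` and `v`. -/
theorem stmt_10 (J D : Dgr) (hJ : Dgr.IsBidirComplete 4 J) (h : Ore4From J D)
    (u v : ℕ) (hu : u ∈ J.verts) (hv : v ∈ J.verts) (huv : u ≠ v)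
    (huv1 : D.Adj u v) (huv2 : D.Adj v u)
    (φ : ℕ → Fin 3) (hφ : (D.delDigon u v).IsDicol φ) :
    ∀ a ∈ J.verts, ∀ b ∈ J.verts, a ≠ b → φ a = φ b →
      ((a = u ∧ b = v) ∨ (a = v ∧ b = u)) :=
  stmt_10_general J D hJ h u v hu hv φ hφ
end

section
/- Let D be a 4-Ore digraph obtained from a copy J of the bidirected K4 by successive Ore-compositions with 4-Ore digraphs, vertices and digons of J always on the digon side, and let v be a vertex of J. Then in every 3-dicolouring of D − v, the vertices of J − v receive pairwise distinct colours. -/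
open Dgr

/-!
In a bidirected digraph every arc lies in a digon, so a dicolouring is the same as a proper
colouring. Let `D` be the Ore-composition of `D₁` (digon side, replaced digon `[x, y]`) and a
4-Ore digraph `D₂` (split vertex `z`). If a proper colouring of `D - v` (with `v ∉ V(D₂)`) gave
`x` and `y` the same colour, then colouring `z` with that colour would properly colour `D₂`,
because every neighbour of `z` is adjacent to `x` or to `y` in `D`. Hence the colouring is a
proper colouring of `D₁ - v`, and by induction of `J - v`, a bidirected `K₃`. The same
argument shows that 4-Ore digraphs are not 3-dicolourable.
-/

namespace Dgr

variable {D D₁ D₂ : Dgr} {k : ℕ} {φ : ℕ → Fin k}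

def IsProper (D : Dgr) (φ : ℕ → Fin k) : Prop := ∀ ⦃u w : ℕ⦄, D.Adj u w → φ u ≠ φ w

theorem isDicol_of_isProper (hφ : D.IsProper φ) : D.IsDicol φ := by
  intro u hcycle
  cases hcycle with
  | single h => exact hφ h.1 h.2
  | tail _ h => exact hφ h.1 h.2

theorem IsProper.del (hφ : D.IsProper φ) (v : ℕ) : (D.del v).IsProper φ :=
  fun _ _ h => hφ h.1

theorem isProper_of_isProper_del_of_notMem {v : ℕ} (hv : v ∉ D.verts)
    (hφ : (D.del v).IsProper φ) : D.IsProper φ := fun _ _ h =>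
  hφ ⟨h, fun e => hv (e ▸ (D.adj_mem h).1), fun e => hv (e ▸ (D.adj_mem h).2)⟩

theorem Bidirected.isProper_of_isDicol (hD : D.Bidirected) (hφ : D.IsDicol φ) :
    D.IsProper φ := fun u _ h e =>
  hφ u (Relation.TransGen.head ⟨h, e⟩ (Relation.TransGen.single ⟨hD h, e.symm⟩))

theorem Bidirected.del (hD : D.Bidirected) (v : ℕ) : (D.del v).Bidirected :=
  fun _ _ h => ⟨hD h.1, h.2.2, h.2.1⟩

theorem IsBidirComplete.bidirected_s11 {n : ℕ} (hD : D.IsBidirComplete n) : D.Bidirected :=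
  fun u w h => hD.2 w (D.adj_mem h).2 u (D.adj_mem h).1 fun e => D.adj_irrefl u (e ▸ h)

theorem IsOreComp.bidirected_s11 (hc : D₁.IsOreComp D₂ D) : D.Bidirected := by
  obtain ⟨hb₁, hb₂, -, x, y, z, Z₁, Z₂, -, -, -, -, -, -, -, -, -, -, hA⟩ := hc
  intro u w huw
  rw [hA] at huw ⊢
  rcases huw with ⟨h, hxy, hyx⟩ | ⟨h, hu, hw⟩ | ⟨h₁, h₂, h₃⟩ | ⟨h₁, h₂, h₃⟩ |
      ⟨h₁, h₂, h₃⟩ | ⟨h₁, h₂, h₃⟩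
  · exact Or.inl ⟨hb₁ h, fun e => hyx e.symm, fun e => hxy e.symm⟩
  · exact Or.inr <| Or.inl ⟨hb₂ h, hw, hu⟩
  · exact Or.inr <| Or.inr <| Or.inr <| Or.inl ⟨h₁, h₂, hb₂ h₃⟩
  · exact Or.inr <| Or.inr <| Or.inl ⟨h₁, h₂, hb₂ h₃⟩
  · exact Or.inr <| Or.inr <| Or.inr <| Or.inr <| Or.inr ⟨h₁, h₂, hb₂ h₃⟩
  · exact Or.inr <| Or.inr <| Or.inr <| Or.inr <| Or.inl ⟨h₁, h₂, hb₂ h₃⟩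

theorem IsOreComp.exists_arcs (hc : D₁.IsOreComp D₂ D) : ∃ x y z : ℕ,
    (∀ ⦃p q⦄, D₁.Adj p q → ¬(p = x ∧ q = y) → ¬(p = y ∧ q = x) → D.Adj p q) ∧
    (∀ ⦃p q⦄, D₂.Adj p q → p ≠ z → q ≠ z → D.Adj p q) ∧
    (∀ ⦃q⦄, D₂.Adj z q → D.Adj x q ∨ D.Adj y q) := by
  obtain ⟨-, -, -, x, y, z, Z₁, Z₂, -, -, -, -, -, hZ, -, -, -, -, hA⟩ := hc
  refine ⟨x, y, z, fun p q h hxy hyx => (hA p q).2 (Or.inl ⟨h, hxy, hyx⟩),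
    fun p q h hp hq => (hA p q).2 (Or.inr (Or.inl ⟨h, hp, hq⟩)), fun q h => ?_⟩
  have hq : q ∈ Z₁ ∪ Z₂ := hZ ▸ h
  rcases hq with hq | hq
  · exact Or.inl <| (hA x q).2 <| Or.inr <| Or.inr <| Or.inl ⟨rfl, hq, h⟩
  · exact Or.inr <| (hA y q).2 <| Or.inr <| Or.inr <| Or.inr <| Or.inr <| Or.inl ⟨rfl, hq, h⟩

theorem IsOreComp.isProper_del_left (hc : D₁.IsOreComp D₂ D) (h₂ : ¬ D₂.Dicolourable k)
    {v : ℕ} (hv : v ∉ D₂.verts) (hφ : (D.del v).IsProper φ) : (D₁.del v).IsProper φ := by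
  obtain ⟨x, y, z, hD₁, hD₂, hz⟩ := hc.exists_arcs
  rintro p q ⟨hpq, hp, hq⟩ heq
  by_cases hxy : (p = x ∧ q = y) ∨ (p = y ∧ q = x)
  swap
  · exact hφ ⟨hD₁ hpq (not_or.1 hxy).1 (not_or.1 hxy).2, hp, hq⟩ heq
  obtain ⟨hφxy, hx, hy⟩ : φ x = φ y ∧ x ≠ v ∧ y ≠ v := by
    rcases hxy with ⟨rfl, rfl⟩ | ⟨rfl, rfl⟩
    · exact ⟨heq, hp, hq⟩
    · exact ⟨heq.symm, hq, hp⟩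
  have hne_v : ∀ ⦃a b⦄, D₂.Adj a b → a ≠ v ∧ b ≠ v := fun a b h =>
    ⟨fun e => hv (e ▸ (D₂.adj_mem h).1), fun e => hv (e ▸ (D₂.adj_mem h).2)⟩
  have hz_ne : ∀ ⦃b⦄, D₂.Adj z b → φ x ≠ φ b := fun b h => by
    rcases hz h with h' | h'
    · exact hφ ⟨h', hx, (hne_v h).2⟩
    · exact hφxy ▸ hφ ⟨h', hy, (hne_v h).2⟩
  refine h₂ ⟨Function.update φ z (φ x), isDicol_of_isProper fun a b hab => ?_⟩
  rcases eq_or_ne a z with rfl | ha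
  · have hb : b ≠ a := fun e => D₂.adj_irrefl a (e ▸ hab)
    simpa [hb] using hz_ne hab
  rcases eq_or_ne b z with rfl | hb
  · simpa [ha] using (hz_ne (hc.2.1 hab)).symm
  simpa [ha, hb] using hφ ⟨hD₂ hab ha hb, hne_v hab⟩

end Dgr

open Dgr

theorem IsOre4.not_dicolourable_three {D : Dgr} (h : IsOre4 D) : ¬ D.Dicolourable 3 := by
  induction h with
  | k4 D hD =>
    rintro ⟨φ, hφ⟩
    have hcard : (Finset.univ : Finset (Fin 3)).card < D.verts.card := by simp [hD.1]
    obtain ⟨a, ha, b, hb, hab, heq⟩ :=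
      Finset.exists_ne_map_eq_of_card_lt_of_maps_to hcard fun u _ => Finset.mem_univ (φ u)
    exact hD.bidirected_s11.isProper_of_isDicol hφ (hD.2 a ha b hb hab) heq
  | comp D₁ D₂ D _ _ hc ih₁ ih₂ =>
    rintro ⟨φ, hφ⟩
    -- deleting a vertex of neither side changes nothing, so the lemma for `D - w` applies
    obtain ⟨w, hw⟩ := Infinite.exists_notMem_finset (D₁.verts ∪ D₂.verts)
    rw [Finset.mem_union, not_or] at hw
    have hφ₁ := hc.isProper_del_left ih₂ hw.2 ((hc.bidirected_s11.isProper_of_isDicol hφ).del w)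
    exact ih₁ ⟨φ, isDicol_of_isProper (isProper_of_isProper_del_of_notMem hw.1 hφ₁)⟩

theorem Ore4From.bidirected_s11 {J D : Dgr} (hJ : J.Bidirected) (h : Ore4From J D) :
    D.Bidirected := by
  cases h with
  | base => exact hJ
  | comp _ _ _ _ _ hc => exact hc.bidirected_s11

theorem Ore4From.verts_subset_s11 {J D : Dgr} (h : Ore4From J D) : J.verts ⊆ D.verts := by
  induction h with
  | base => exact subset_rfl
  | comp _ _ _ _ _ hc ih =>
    obtain ⟨-, -, -, -, -, _, -, -, -, -, -, -, -, -, -, -, -, hV, -⟩ := hc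
    exact hV ▸ ih.trans Finset.subset_union_left

theorem Ore4From.isProper_del {J D : Dgr} (h : Ore4From J D) {v : ℕ} (hv : v ∈ J.verts)
    {φ : ℕ → Fin 3} (hφ : (D.del v).IsProper φ) : (J.del v).IsProper φ := by
  induction h with
  | base => exact hφ
  | comp D₁ D₂ D h₁ h₂ hc ih =>
    have hv₂ : v ∉ D₂.verts := Finset.disjoint_left.1 hc.2.2.1 (h₁.verts_subset_s11 hv)
    exact ih (hc.isProper_del_left h₂.not_dicolourable_three hv₂ hφ)

/-- if `D` is obtained from a copy `J` of the bidirected `K4` by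
successive Ore-compositions (with `J` on the digon side) and `v ∈ V(J)`, then in
every 3-dicolouring of `D - v` the vertices of `J - v` get pairwise distinct
colours. -/
theorem stmt_11 (J D : Dgr) (hJ : Dgr.IsBidirComplete 4 J) (h : Ore4From J D)
    (v : ℕ) (hv : v ∈ J.verts)
    (φ : ℕ → Fin 3) (hφ : (D.del v).IsDicol φ) :
    ∀ a ∈ J.verts, ∀ b ∈ J.verts, a ≠ v → b ≠ v → a ≠ b → φ a ≠ φ b := by
  have hproper : (D.del v).IsProper φ :=
    ((h.bidirected_s11 hJ.bidirected_s11).del v).isProper_of_isDicol hφ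
  intro a ha b hb hav hbv hab
  exact h.isProper_del hv hproper ⟨hJ.2 a ha b hb hab, hav, hbv⟩
end

section
/- If D is a 4-Ore digraph and R is a subdigraph of D with 0 < n(R) < n(D), then (10/3)n(R) − m(R) ≥ 10/3. -/
open Dgr

/-!
Write `ρ_D(S) = 10|S| − 3·m(D[S])`. By induction along Ore-compositions, every 4-Ore digraph `D`
has `ρ_D(S) ≥ 10` for every nonempty `S ⊊ V(D)` and `ρ_D(V(D)) ≥ 4`; for `K₄` this is a direct
count. Let `D` be composed of `D₁` (digon `[x,y]` deleted) and `D₂` (vertex `z` split into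
`Z₁ ∪ Z₂`), and let `S ⊆ V(D)` meet `D₁` in `S₁` and `D₂` in `S₂`. The arcs of `D[S]` between `x`
and `Z₁` and between `y` and `Z₂` are matched by arcs at `z` in `D₂`, so if `x, y ∈ S` then
`ρ_D(S) ≥ ρ_{D₁}(S₁) + ρ_{D₂}(S₂ + z) − 4`, and both terms are `4` only when `S = V(D)`. If only
`x ∈ S`, then `S₁` is proper, and the arcs from `z` to `Z₂ ∩ S₂`, which exist as soon as
`S₂ + z = V(D₂)`, make up the difference. If `x, y ∉ S`, then `ρ_D(S) ≥ ρ_{D₁}(S₁) + ρ_{D₂}(S₂)`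
with both sets proper.
-/

namespace Finset

variable {α : Type*} [DecidableEq α]

theorem card_eq_card_inter_add_card_inter {S V₁ V₂ : Finset α} (hdisj : Disjoint V₁ V₂)
    (hS : S ⊆ V₁ ∪ V₂) : #S = #(S ∩ V₁) + #(S ∩ V₂) := by
  rw [← card_union_of_disjoint (hdisj.mono inter_subset_right inter_subset_right),
    ← inter_union_distrib_left, inter_eq_left.2 hS]

theorem card_union_erase_add_one {V₁ V₂ : Finset α} {z : α} (hdisj : Disjoint V₁ V₂)
    (hz : z ∈ V₂) : #(V₁ ∪ V₂.erase z) + 1 = #V₁ + #V₂ := by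
  rw [card_union_of_disjoint (hdisj.mono_right (erase_subset _ _)), card_erase_of_mem hz]
  have := card_pos.2 ⟨z, hz⟩
  omega

theorem card_inter_lt_card {S V : Finset α} {w : α} (hw : w ∈ V) (hwS : w ∉ S) :
    #(S ∩ V) < #V :=
  card_lt_card ⟨inter_subset_right, fun h => hwS (mem_inter.1 (h hw)).1⟩

end Finset

namespace Dgr

open Finset Classical

noncomputable def arcsIn (D : Dgr) (S : Finset ℕ) : Finset (ℕ × ℕ) :=
  (S ×ˢ S).filter fun p => D.Adj p.1 p.2

@[simp]
theorem mem_arcsIn {D : Dgr} {S : Finset ℕ} {p : ℕ × ℕ} :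
    p ∈ D.arcsIn S ↔ D.Adj p.1 p.2 ∧ p.1 ∈ S ∧ p.2 ∈ S := by
  simp [arcsIn, and_comm]

theorem arcsIn_inter_verts (D : Dgr) (S : Finset ℕ) : D.arcsIn (S ∩ D.verts) = D.arcsIn S := by
  ext p
  simp only [mem_arcsIn, mem_inter]
  exact ⟨fun h => ⟨h.1, h.2.1.1, h.2.2.1⟩,
    fun h => ⟨h.1, ⟨h.2.1, (D.adj_mem h.1).1⟩, h.2.2, (D.adj_mem h.1).2⟩⟩

theorem card_arcsIn_le (D : Dgr) (S : Finset ℕ) : #(D.arcsIn S) ≤ #S * (#S - 1) := by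
  have hsub : D.arcsIn S ⊆ S.offDiag := fun p hp => by
    obtain ⟨hadj, h1, h2⟩ := mem_arcsIn.1 hp
    exact mem_offDiag.2 ⟨h1, h2, fun h => D.adj_irrefl _ (h ▸ hadj)⟩
  simpa [offDiag_card, Nat.mul_sub_one] using card_le_card hsub

theorem Subd.nA_le_card_arcsIn {R D : Dgr} (h : R.Subd D) : R.nA ≤ #(D.arcsIn R.verts) := by
  rw [nA, ← Set.ncard_coe_finset]
  refine Set.ncard_le_ncard (fun p hp => ?_) (finite_toSet _)
  exact mem_arcsIn.2 ⟨h.2 hp, R.adj_mem hp⟩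

def starArcs (x : ℕ) (W : Finset ℕ) : Finset (ℕ × ℕ) := {x} ×ˢ W ∪ W ×ˢ {x}

theorem card_starArcs_le (x : ℕ) (W : Finset ℕ) : #(starArcs x W) ≤ 2 * #W := by
  refine (card_union_le _ _).trans ?_
  simp [two_mul]

theorem card_starArcs {x : ℕ} {W : Finset ℕ} (hx : x ∉ W) : #(starArcs x W) = 2 * #W := by
  rw [starArcs, card_union_of_disjoint, card_product, card_product, card_singleton, two_mul,
    one_mul, mul_one]
  refine disjoint_left.2 fun p hp hp' => ?_
  simp only [mem_product, mem_singleton] at hp hp'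
  exact hx (hp.1 ▸ hp'.1)

theorem card_arcsIn_add_le_card_arcsIn_insert {D : Dgr} (hD : D.Bidirected) {z : ℕ}
    {T W : Finset ℕ} (hzT : z ∉ T) (hWT : W ⊆ T) (hW : ∀ v ∈ W, D.Adj z v) :
    #(D.arcsIn T) + 2 * #W ≤ #(D.arcsIn (insert z T)) := by
  have hsub : D.arcsIn T ∪ starArcs z W ⊆ D.arcsIn (insert z T) := by
    rintro ⟨u, v⟩ huv
    simp only [mem_union, mem_arcsIn, starArcs, mem_product, mem_singleton] at huv ⊢
    rcases huv with ⟨h, hu, hv⟩ | ⟨rfl, hv⟩ | ⟨hu, rfl⟩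
    · exact ⟨h, mem_insert_of_mem hu, mem_insert_of_mem hv⟩
    · exact ⟨hW v hv, mem_insert_self _ _, mem_insert_of_mem (hWT hv)⟩
    · exact ⟨hD (hW u hu), mem_insert_of_mem (hWT hu), mem_insert_self _ _⟩
  have hdisj : Disjoint (D.arcsIn T) (starArcs z W) := by
    refine disjoint_left.2 fun ⟨u, v⟩ huv hstar => ?_
    simp only [mem_arcsIn, starArcs, mem_union, mem_product, mem_singleton] at huv hstar
    rcases hstar with ⟨rfl, -⟩ | ⟨-, rfl⟩
    exacts [hzT huv.2.1, hzT huv.2.2]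
  rw [← card_starArcs fun hz => hzT (hWT hz), ← card_union_of_disjoint hdisj]
  exact card_le_card hsub

theorem card_arcsIn_add_le_of_adj {D D₁ D₂ : Dgr} {x y : ℕ} {Z₁ Z₂ : Set ℕ}
    (hD₁ : D₁.Bidirected) (hxy : D₁.Adj x y)
    (hadj : ∀ u v, D.Adj u v →
      (D₁.Adj u v ∧ ¬(u = x ∧ v = y) ∧ ¬(u = y ∧ v = x)) ∨ D₂.Adj u v ∨
      (u = x ∧ v ∈ Z₁) ∨ (v = x ∧ u ∈ Z₁) ∨ (u = y ∧ v ∈ Z₂) ∨ (v = y ∧ u ∈ Z₂))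
    (S : Finset ℕ) :
    #(D.arcsIn S) + (if x ∈ S ∧ y ∈ S then 2 else 0) ≤
      #(D₁.arcsIn S) + #(D₂.arcsIn S) + (if x ∈ S then 2 * #(S.filter (· ∈ Z₁)) else 0) +
        (if y ∈ S then 2 * #(S.filter (· ∈ Z₂)) else 0) := by
  set digon : Finset (ℕ × ℕ) := {(x, y), (y, x)}
  set Ux := if x ∈ S then starArcs x (S.filter (· ∈ Z₁)) else ∅
  set Uy := if y ∈ S then starArcs y (S.filter (· ∈ Z₂)) else ∅
  have hsub : D.arcsIn S ⊆ (D₁.arcsIn S \ digon) ∪ D₂.arcsIn S ∪ Ux ∪ Uy := by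
    rintro ⟨u, v⟩ huv
    obtain ⟨h, hu, hv⟩ := mem_arcsIn.1 huv
    rcases hadj u v h with h | h | ⟨rfl, h⟩ | ⟨rfl, h⟩ | ⟨rfl, h⟩ | ⟨rfl, h⟩ <;>
      simp_all [digon, Ux, Uy, starArcs]
  have hdigon : #(D₁.arcsIn S \ digon) + (if x ∈ S ∧ y ∈ S then 2 else 0) ≤ #(D₁.arcsIn S) := by
    split_ifs with hS
    · have hsub : digon ⊆ D₁.arcsIn S := by
        simp [digon, insert_subset_iff, hxy, hD₁ hxy, hS]
      have hne : (x, y) ≠ (y, x) := fun h => by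
        obtain ⟨rfl, -⟩ := Prod.mk.inj h
        exact D₁.adj_irrefl _ hxy
      have := card_le_card hsub
      rw [card_sdiff_of_subset hsub, card_pair hne] at *
      omega
    · simpa using card_le_card (sdiff_subset (s := D₁.arcsIn S) (t := digon))
  have hUx : #Ux ≤ if x ∈ S then 2 * #(S.filter (· ∈ Z₁)) else 0 := by
    split_ifs <;> simp [Ux, *, card_starArcs_le]
  have hUy : #Uy ≤ if y ∈ S then 2 * #(S.filter (· ∈ Z₂)) else 0 := by
    split_ifs <;> simp [Uy, *, card_starArcs_le]
  have := card_le_card hsub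
  have := card_union_le (D₁.arcsIn S \ digon ∪ D₂.arcsIn S ∪ Ux) Uy
  have := card_union_le (D₁.arcsIn S \ digon ∪ D₂.arcsIn S) Ux
  have := card_union_le (D₁.arcsIn S \ digon) (D₂.arcsIn S)
  omega

def OreSparse (D : Dgr) : Prop :=
  ∀ S ⊆ D.verts, S.Nonempty →
    3 * #(D.arcsIn S) + 10 ≤ 10 * #S ∨ #S = #D.verts ∧ 3 * #(D.arcsIn S) + 4 ≤ 10 * #S

theorem OreSparse.of_card_verts_le_four {D : Dgr} (h : #D.verts ≤ 4) : D.OreSparse := by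
  intro S hS hne
  have hm := D.card_arcsIn_le S
  have hSV := card_le_card hS
  have h0 := hne.card_pos
  have h4 : #S ≤ 4 := hSV.trans h
  interval_cases #S <;> omega

theorem OreSparse.cases_of_subset {D : Dgr} (hD : D.OreSparse) {S : Finset ℕ} (hS : S ⊆ D.verts) :
    #S = 0 ∧ #(D.arcsIn S) = 0 ∨ 3 * #(D.arcsIn S) + 10 ≤ 10 * #S ∨
      #S = #D.verts ∧ 3 * #(D.arcsIn S) + 4 ≤ 10 * #S := by
  rcases S.eq_empty_or_nonempty with rfl | hne
  · simp [arcsIn]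
  · exact Or.inr (hD S hS hne)

theorem OreSparse.cases_of_insert {D : Dgr} (hD : D.OreSparse) (hb : D.Bidirected) {z : ℕ}
    (hz : z ∈ D.verts) {S W : Finset ℕ} (hzS : z ∉ S) (hWS : W ⊆ S) (hW : ∀ v ∈ W, D.Adj z v) :
    3 * (#(D.arcsIn S) + 2 * #W) + 10 ≤ 10 * (#(S ∩ D.verts) + 1) ∨
      (∀ v, D.Adj z v → v ∈ S) ∧ #(S ∩ D.verts) + 1 = #D.verts ∧
        3 * (#(D.arcsIn S) + 2 * #W) + 4 ≤ 10 * (#(S ∩ D.verts) + 1) := by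
  have hstar := card_arcsIn_add_le_card_arcsIn_insert hb hzS hWS hW
  have hTV : insert z (S ∩ D.verts) ⊆ D.verts := insert_subset hz inter_subset_right
  have hcard : #(insert z (S ∩ D.verts)) = #(S ∩ D.verts) + 1 :=
    card_insert_of_notMem fun h => hzS (mem_inter.1 h).1
  rw [← D.arcsIn_inter_verts (insert z S), insert_inter_of_mem hz] at hstar
  rcases hD _ hTV (insert_nonempty _ _) with h | ⟨hfull, h⟩
  · omega
  · refine Or.inr ⟨fun v hv => ?_, by omega, by omega⟩
    have hvT : v ∈ insert z (S ∩ D.verts) := by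
      rw [eq_of_subset_of_card_le hTV hfull.ge]
      exact (D.adj_mem hv).2
    have hvz : v ≠ z := fun h => D.adj_irrefl z (h ▸ hv)
    exact (mem_inter.1 ((mem_insert.1 hvT).resolve_left hvz)).1

theorem OreSparse.of_isOreComp {D₁ D₂ D : Dgr} (h₁ : D₁.OreSparse) (h₂ : D₂.OreSparse)
    (hD : IsOreComp D₁ D₂ D) : D.OreSparse := by
  obtain ⟨hb₁, hb₂, hdisj, x, y, z, Z₁, Z₂, hx, hy, -, hxy, hz, hZ, hZd, ⟨v₁, hv₁⟩, ⟨v₂, hv₂⟩,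
    hV, hadj⟩ := hD
  have hZ₁ : ∀ v ∈ Z₁, D₂.Adj z v := fun v hv => hZ.subset (Or.inl hv)
  have hZ₂ : ∀ v ∈ Z₂, D₂.Adj z v := fun v hv => hZ.subset (Or.inr hv)
  intro S hS hne
  have hcount := card_arcsIn_add_le_of_adj (D₂ := D₂) (Z₁ := Z₁) (Z₂ := Z₂) hb₁ hxy
    (fun u v h => by have := (hadj u v).1 h; tauto) S
  set W₁ := S.filter (· ∈ Z₁)
  set W₂ := S.filter (· ∈ Z₂)
  have hzS : z ∉ S := fun h => by simpa [hV, disjoint_right.1 hdisj hz] using hS h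
  have hcardS : #S = #(S ∩ D₁.verts) + #(S ∩ D₂.verts) :=
    card_eq_card_inter_add_card_inter hdisj
      ((hV ▸ hS).trans (union_subset_union_right (erase_subset _ _)))
  have hcardV : #D.verts + 1 = #D₁.verts + #D₂.verts := hV ▸ card_union_erase_add_one hdisj hz
  have hW : #(W₁ ∪ W₂) = #W₁ + #W₂ :=
    card_union_of_disjoint (disjoint_filter.2 fun v _ h₁ h₂ => Set.disjoint_left.1 hZd h₁ h₂)
  have hWadj : ∀ v ∈ W₁ ∪ W₂, D₂.Adj z v := by
    simp only [mem_union, mem_filter, W₁, W₂]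
    rintro v (⟨-, hv⟩ | ⟨-, hv⟩)
    exacts [hZ₁ v hv, hZ₂ v hv]
  have hside := h₂.cases_of_insert hb₂ hz hzS
    (union_subset (filter_subset _ _) (filter_subset _ _)) hWadj
  have hfull : (∀ v, D₂.Adj z v → v ∈ S) → 0 < #W₁ ∧ 0 < #W₂ := fun h =>
    ⟨card_pos.2 ⟨v₁, mem_filter.2 ⟨h v₁ (hZ₁ v₁ hv₁), hv₁⟩⟩,
      card_pos.2 ⟨v₂, mem_filter.2 ⟨h v₂ (hZ₂ v₂ hv₂), hv₂⟩⟩⟩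
  replace hside := hside.imp_right fun h => And.intro (hfull h.1) h.2
  rw [hW] at hside
  have hT₁ := h₁.cases_of_subset (S := S ∩ D₁.verts) inter_subset_right
  have hT₂ := h₂.cases_of_subset (S := S ∩ D₂.verts) inter_subset_right
  rw [arcsIn_inter_verts] at hT₁ hT₂
  have hlt₂ := card_inter_lt_card hz hzS
  have hpos₁ : ∀ w ∈ D₁.verts, w ∈ S → 0 < #(S ∩ D₁.verts) :=
    fun w hw hwS => card_pos.2 ⟨w, mem_inter.2 ⟨hwS, hw⟩⟩
  by_cases hxS : x ∈ S <;> by_cases hyS : y ∈ S <;>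
    simp only [hxS, hyS, and_self, and_true, and_false, if_true, if_false] at hcount
  · have := hpos₁ x hx hxS
    omega
  · have := hpos₁ x hx hxS
    have := card_inter_lt_card hy hyS
    omega
  · have := hpos₁ y hy hyS
    have := card_inter_lt_card hx hxS
    omega
  · have := hne.card_pos
    have := card_inter_lt_card hx hxS
    omega

end Dgr

theorem IsOre4.oreSparse {D : Dgr} (h : IsOre4 D) : D.OreSparse := by
  induction h with
  | k4 D hD => exact OreSparse.of_card_verts_le_four hD.1.le
  | comp D₁ D₂ D _ _ hD ih₁ ih₂ => exact ih₁.of_isOreComp ih₂ hD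


/-- subdigraphs of 4-Ore digraphs with `0 < n(R) < n(D)` satisfy
`(10/3)n(R) − m(R) ≥ 10/3`. -/
theorem stmt_12 (D : Dgr) (h : IsOre4 D) (R : Dgr) (hR : Dgr.Subd R D)
    (h0 : 0 < R.nV) (h1 : R.nV < D.nV) :
    (10 : ℝ) / 3 ≤ 10 / 3 * (R.nV : ℝ) - (R.nA : ℝ) := by
  have hm := hR.nA_le_card_arcsIn
  rcases h.oreSparse R.verts hR.1 (Finset.card_pos.1 h0) with hbound | ⟨hfull, -⟩
  · have : 3 * R.nA + 10 ≤ 10 * R.nV := by unfold nV; omega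
    have : (3 : ℝ) * R.nA + 10 ≤ 10 * R.nV := by exact_mod_cast this
    linarith
  · exact absurd hfull (ne_of_lt h1)
end

section
/- Let D be a 4-dicritical digraph, R an induced subdigraph of D with 4 ≤ n(R) < n(D), and φ a 3-dicolouring of R. Then the φ-identification D_φ(R) of R in D is not 3-dicolourable. -/
open Dgr

namespace Dgr

/-- `D'` is the φ-identification of (the induced subdigraph on) `R` in `D`,
where the three colour classes of `R` are identified to the fresh vertices
`x 0, x 1, x 2`, and the three digons between them are added. -/
def IsIdent (D : Dgr) (R : Finset ℕ) (φ : ℕ → Fin 3) (x : Fin 3 → ℕ) (D' : Dgr) : Prop :=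
  Function.Injective x ∧ (∀ i, x i ∉ D.verts) ∧
  D'.verts = (D.verts \ R) ∪ Finset.image x Finset.univ ∧
  ∀ u v, D'.Adj u v ↔
    (D.Adj u v ∧ u ∉ R ∧ v ∉ R) ∨
    (∃ i, u = x i ∧ v ∉ R ∧ ∃ w ∈ R, φ w = i ∧ D.Adj w v) ∨
    (∃ j, v = x j ∧ u ∉ R ∧ ∃ w ∈ R, φ w = j ∧ D.Adj u w) ∨
    (∃ i j : Fin 3, i ≠ j ∧ u = x i ∧ v = x j)

end Dgr

/-!
Pull a 3-dicolouring `ψ` of `D_φ(R)` back to `D`: a vertex `v ∈ R` gets the colour of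
`x (φ v)`, every other vertex keeps its colour. The digons between the `x i` make the
colours `ψ (x i)` distinct, so a monochromatic arc inside `R` joins two vertices of the same
φ-class. Hence a monochromatic cycle of `D` either stays in one φ-class of `R`, contradicting
that `φ` dicolours `R`, or its image in `D_φ(R)` is a monochromatic closed walk using an arc
outside `R`. So `D` would be 3-dicolourable, against `χ(D) = 4`.
-/

namespace Relation.TransGen

variable {α β : Type*} {r s : α → α → Prop} {r' : β → β → Prop} {f : α → β}

theorem and_eq_or_map (h : ∀ a b, r a b → (s a b ∧ f a = f b) ∨ r' (f a) (f b))
    {a b : α} (hab : TransGen r a b) :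
    (TransGen s a b ∧ f a = f b) ∨ TransGen r' (f a) (f b) := by
  induction hab with
  | single hab => exact (h _ _ hab).imp (And.imp_left single) single
  | tail _ hbc ih =>
    rcases ih, h _ _ hbc with ⟨⟨hs, hf⟩ | hr', ⟨hs', hf'⟩ | hr''⟩
    · exact .inl ⟨hs.tail hs', hf.trans hf'⟩
    · exact .inr (hf ▸ single hr'')
    · exact .inr (hf' ▸ hr')
    · exact .inr (hr'.tail hr'')

end Relation.TransGen

namespace Dgr

theorem Acy.of_forall_or_map {r s r' : ℕ → ℕ → Prop} {f : ℕ → ℕ} (hs : Acy s) (hr' : Acy r')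
    (h : ∀ a b, r a b → (s a b ∧ f a = f b) ∨ r' (f a) (f b)) : Acy r := fun v hv =>
  (hv.and_eq_or_map h).elim (fun hv => hs v hv.1) (hr' (f v))

theorem IsDicol.ne_of_digon {D : Dgr} {k : ℕ} {ψ : ℕ → Fin k} (hψ : D.IsDicol ψ) {u v : ℕ}
    (huv : D.Adj u v) (hvu : D.Adj v u) : ψ u ≠ ψ v := fun he =>
  hψ u ((Relation.TransGen.single ⟨huv, he⟩).tail ⟨hvu, he.symm⟩)

def identMap (R : Finset ℕ) (φ : ℕ → Fin 3) (x : Fin 3 → ℕ) (v : ℕ) : ℕ :=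
  if v ∈ R then x (φ v) else v

namespace IsIdent

variable {D D' : Dgr} {R : Finset ℕ} {φ : ℕ → Fin 3} {x : Fin 3 → ℕ}

theorem adj_of_ne (hident : D.IsIdent R φ x D') {i j : Fin 3} (hij : i ≠ j) :
    D'.Adj (x i) (x j) :=
  (hident.2.2.2 _ _).2 (.inr (.inr (.inr ⟨i, j, hij, rfl, rfl⟩)))

theorem adj_identMap (hident : D.IsIdent R φ x D') {a b : ℕ} (hab : D.Adj a b)
    (hR : a ∉ R ∨ b ∉ R) : D'.Adj (identMap R φ x a) (identMap R φ x b) := by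
  rw [hident.2.2.2]
  unfold identMap
  by_cases ha : a ∈ R <;> by_cases hb : b ∈ R
  · exact absurd ⟨ha, hb⟩ (not_and_or.2 hR)
  · rw [if_pos ha, if_neg hb]
    exact .inr (.inl ⟨φ a, rfl, hb, a, ha, rfl, hab⟩)
  · rw [if_neg ha, if_pos hb]
    exact .inr (.inr (.inl ⟨φ b, rfl, ha, b, hb, rfl, hab⟩))
  · rw [if_neg ha, if_neg hb]
    exact .inl ⟨hab, ha, hb⟩

theorem isDicol_comp_identMap (hident : D.IsIdent R φ x D') (hφ : (D.induce R).IsDicol φ)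
    {ψ : ℕ → Fin 3} (hψ : D'.IsDicol ψ) : D.IsDicol (ψ ∘ identMap R φ x) := by
  refine Acy.of_forall_or_map (f := identMap R φ x) hφ hψ fun a b ⟨hab, hcol⟩ => ?_
  by_cases hR : a ∈ R ∧ b ∈ R
  · have hφab : φ a = φ b := by
      by_contra hne
      refine hψ.ne_of_digon (hident.adj_of_ne hne) (hident.adj_of_ne (Ne.symm hne)) ?_
      simpa [identMap, hR.1, hR.2] using hcol
    exact .inl ⟨⟨⟨hab, hR⟩, hφab⟩, by simp [identMap, hR.1, hR.2, hφab]⟩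
  · exact .inr ⟨hident.adj_identMap hab (not_and_or.1 hR), hcol⟩

end IsIdent

end Dgr

theorem stmt_13_general (D : Dgr) (hD : Dgr.Dicritical 4 D)
    (R : Finset ℕ)
    (φ : ℕ → Fin 3) (hφ : (D.induce R).IsDicol φ)
    (x : Fin 3 → ℕ) (D' : Dgr) (hident : D.IsIdent R φ x D') :
    ¬ D'.Dicolourable 3 := by
  rintro ⟨ψ, hψ⟩
  have h3 : D.dichr ≤ 3 := Nat.sInf_le ⟨_, hident.isDicol_comp_identMap hφ hψ⟩
  rw [hD.1] at h3
  omega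

/-- the φ-identification of an induced subdigraph of a 4-dicritical
digraph is not 3-dicolourable. -/
theorem stmt_13 (D : Dgr) (hD : Dgr.Dicritical 4 D)
    (R : Finset ℕ) (hRD : R ⊆ D.verts) (hR4 : 4 ≤ R.card) (hRn : R.card < D.verts.card)
    (φ : ℕ → Fin 3) (hφ : (D.induce R).IsDicol φ)
    (x : Fin 3 → ℕ) (D' : Dgr) (hident : D.IsIdent R φ x D') :
    ¬ D'.Dicolourable 3 :=
  stmt_13_general D hD R φ hφ x D' hident
end

section
/- Let D be a digraph obtained from a tournament T on k ≥ 4 vertices by adding, for each arc xy of T, a disjoint copy G^{xy} of a fixed (k−1)-dicritical oriented graph G, together with all arcs from y to V(G^{xy}) and all arcs from V(G^{xy}) to x. Then D is k-dicritical. -/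
open Dgr

namespace Dgr

/-- isomorphism of digraphs -/
def DIso (G H : Dgr) : Prop :=
  ∃ f : ℕ → ℕ, Set.BijOn f ↑G.verts ↑H.verts ∧
    ∀ u ∈ G.verts, ∀ v ∈ G.verts, (G.Adj u v ↔ H.Adj (f u) (f v))

/-- a tournament: an oriented graph with exactly one arc between any two
distinct vertices -/
def IsTournament (T : Dgr) : Prop :=
  T.Oriented ∧ ∀ u ∈ T.verts, ∀ v ∈ T.verts, u ≠ v → (T.Adj u v ∨ T.Adj v u)

end Dgr

/-!
Colour `T` injectively and every copy with the colours of a dicolouring of `G`: a monochromatic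
cycle cannot stay inside a copy, and once it leaves the copy `C x y` through `x` it joins two
vertices `y`, `x` of `T` of different colours. Conversely, in a `(k - 1)`-dicolouring every arc
`xy` of `T` is bichromatic, since the copy `C x y` needs all `k - 1` colours and a vertex `w` of
it coloured like `x` closes the cycle `x → y → w → x`; this is impossible on the `k` vertices
of `T`. For criticality, an arc `pq` of `D` belongs to the gadget of some arc `x₀y₀` of `T`. Give
`x₀` and `y₀` a common colour `c` and the other vertices of `T` distinct colours; then the only
possible monochromatic cycles run `x₀ → y₀ ⇝ C x₀ y₀ ⇝ x₀`, and a colouring of `C x₀ y₀` in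
which `c` is absent (`pq` inside the copy) or used only at the endpoint of `pq` in the copy
(given by the criticality of `G`) forces every such cycle through `pq`.
-/

namespace Dgr

open Relation

section Acyclicity

variable {r s : ℕ → ℕ → Prop}

lemma Acy.mono (hs : Acy s) (h : ∀ u v, r u v → s u v) : Acy r :=
  fun v hv => hs v (TransGen.mono h _ _ hv)

lemma acy_of_forall_not (h : ∀ u v, ¬ r u v) : Acy r := fun v hv =>
  let ⟨w, hvw, _⟩ := TransGen.head'_iff.1 hv
  h v w hvw

lemma acy_of_forall_eq {a b : ℕ} (hab : a ≠ b) (h : ∀ u v, r u v → u = a ∧ v = b) : Acy r := by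
  have key : ∀ u v, TransGen r u v → u = a ∧ v = b := by
    intro u v huv
    induction huv with
    | single h₁ => exact h _ _ h₁
    | tail _ h₂ ih => exact ⟨ih.1, (h _ _ h₂).2⟩
  exact fun v hv => hab ((key v v hv).1.symm.trans (key v v hv).2)

lemma eq_of_transGen {α : Type*} {φ : ℕ → α} (hφ : ∀ u v, r u v → φ u = φ v) {u v : ℕ}
    (h : TransGen r u v) : φ u = φ v := by
  induction h with
  | single h => exact hφ _ _ h
  | tail _ h ih => exact ih.trans (hφ _ _ h)

lemma mem_of_reflTransGen {S : Set ℕ} (hS : ∀ a b, r a b → a ∈ S → b ∈ S) {u v : ℕ}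
    (h : ReflTransGen r u v) (hu : u ∈ S) : v ∈ S := by
  induction h with
  | refl => exact hu
  | tail _ h ih => exact hS _ _ h ih

lemma transGen_restrict_of_forall_mem {S : Set ℕ} (hS : ∀ a b, r a b → a ∈ S → b ∈ S)
    {u v : ℕ} (h : TransGen r u v) (hu : u ∈ S) :
    TransGen (fun a b => r a b ∧ a ∈ S ∧ b ∈ S) u v := by
  induction h using TransGen.head_induction_on with
  | single h => exact .single ⟨h, hu, hS _ _ h hu⟩
  | head h _ ih => exact .head ⟨h, hu, hS _ _ h hu⟩ (ih (hS _ _ h hu))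

def skeleton (S : Set ℕ) (r : ℕ → ℕ → Prop) (s t : ℕ) : Prop :=
  s ∈ S ∧ t ∈ S ∧ ∃ a, ReflTransGen (fun a b => r a b ∧ b ∉ S) s a ∧ r a t

lemma transGen_of_skeleton {S : Set ℕ} {u v : ℕ} (h : skeleton S r u v) : TransGen r u v :=
  let ⟨_, _, _, hua, hav⟩ := h
  TransGen.tail' (ReflTransGen.mono (fun _ _ h => h.1) _ _ hua) hav

lemma exists_skeleton_of_reflTransGen {S : Set ℕ} {u v : ℕ} (hu : u ∈ S)
    (h : ReflTransGen r u v) :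
    ∃ s ∈ S, ReflTransGen (skeleton S r) u s ∧ ReflTransGen (fun a b => r a b ∧ b ∉ S) s v := by
  induction h with
  | refl => exact ⟨u, hu, .refl, .refl⟩
  | @tail b c _ hbc ih =>
    obtain ⟨s, hs, hus, hsb⟩ := ih
    by_cases hc : c ∈ S
    · exact ⟨c, hc, hus.tail ⟨hs, hc, b, hsb, hbc⟩, .refl⟩
    · exact ⟨s, hs, hus, hsb.tail ⟨hbc, hc⟩⟩

lemma transGen_skeleton {S : Set ℕ} {u v : ℕ} (hu : u ∈ S) (hv : v ∈ S) (h : TransGen r u v) :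
    TransGen (skeleton S r) u v := by
  obtain ⟨b, hub, hbv⟩ := TransGen.tail'_iff.1 h
  obtain ⟨s, hs, hus, hsb⟩ := exists_skeleton_of_reflTransGen hu hub
  exact TransGen.tail' hus ⟨hs, hv, b, hsb, hbv⟩

lemma transGen_compl_or_exists_mem (S : Set ℕ) {u v : ℕ} (h : TransGen r u v) :
    TransGen (fun a b => r a b ∧ a ∉ S ∧ b ∉ S) u v ∨
      ∃ s ∈ S, ReflTransGen r u s ∧ ReflTransGen r s v := by
  induction h with
  | @single b hub =>
    by_cases hu : u ∈ S
    · exact .inr ⟨u, hu, .refl, .single hub⟩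
    by_cases hb : b ∈ S
    · exact .inr ⟨b, hb, .single hub, .refl⟩
    exact .inl (.single ⟨hub, hu, hb⟩)
  | @tail b c hub hbc ih =>
    rcases ih with ih | ⟨s, hs, hus, hsb⟩
    · by_cases hb : b ∈ S
      · exact .inr ⟨b, hb, hub.to_reflTransGen, .single hbc⟩
      by_cases hc : c ∈ S
      · exact .inr ⟨c, hc, (hub.tail hbc).to_reflTransGen, .refl⟩
      exact .inl (ih.tail ⟨hbc, hb, hc⟩)
    · exact .inr ⟨s, hs, hus, hsb.tail hbc⟩

/-- A cycle either avoids `S` or, rotated to start in `S`, is a cycle of the skeleton. -/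
theorem Acy.of_skeleton (S : Set ℕ) (hout : Acy (fun a b => r a b ∧ a ∉ S ∧ b ∉ S))
    (hskel : Acy (skeleton S r)) : Acy r := by
  intro v hv
  rcases transGen_compl_or_exists_mem S hv with h | ⟨s, hs, hvs, hsv⟩
  · exact hout v h
  · exact hskel s (transGen_skeleton hs hs (TransGen.trans_right hsv (hv.trans_left hvs)))

end Acyclicity

section Dicolouring

variable {D E F : Dgr} {m n : ℕ}

lemma IsDicol.comp {φ : ℕ → Fin n} (hφ : F.IsDicol φ) {g : ℕ → ℕ}
    (hg : ∀ u v, E.Adj u v → F.Adj (g u) (g v)) : E.IsDicol (φ ∘ g) :=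
  fun v hv => hφ (g v) (TransGen.lift g (fun _ _ h => ⟨hg _ _ h.1, h.2⟩) _ _ hv)

lemma IsDicol.mono {φ : ℕ → Fin n} (hφ : F.IsDicol φ) (h : ∀ u v, E.Adj u v → F.Adj u v) :
    E.IsDicol φ :=
  hφ.comp (g := id) h

lemma Dicolourable.of_hom (hF : F.Dicolourable n) {g : ℕ → ℕ}
    (hg : ∀ u v, E.Adj u v → F.Adj (g u) (g v)) : E.Dicolourable n :=
  let ⟨φ, hφ⟩ := hF
  ⟨φ ∘ g, hφ.comp hg⟩

lemma Dicolourable.of_le (hD : D.Dicolourable m) (hmn : m ≤ n) : D.Dicolourable n :=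
  let ⟨φ, hφ⟩ := hD
  ⟨Fin.castLE hmn ∘ φ, Acy.mono hφ fun _ _ h => ⟨h.1, Fin.castLE_injective hmn h.2⟩⟩

lemma isDicol_of_injOn {φ : ℕ → Fin n} (hφ : Set.InjOn φ D.verts) : D.IsDicol φ :=
  acy_of_forall_not fun _ v ⟨huv, he⟩ =>
    D.adj_irrefl v (hφ (D.adj_mem huv).1 (D.adj_mem huv).2 he ▸ huv)

lemma exists_injOn_fin (s : Finset ℕ) [NeZero n] (hs : s.card ≤ n) :
    ∃ φ : ℕ → Fin n, Set.InjOn φ s := by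
  refine ⟨fun v => if h : v ∈ s then Fin.castLE hs (s.equivFin ⟨v, h⟩) else 0, ?_⟩
  intro u hu v hv huv
  simp only [Finset.mem_coe] at hu hv
  simp only [dif_pos hu, dif_pos hv] at huv
  simpa using s.equivFin.injective (Fin.castLE_injective hs huv)

lemma exists_fin_identifying (s : Finset ℕ) [NeZero n] (hs : s.card ≤ n + 1) {a b : ℕ}
    (ha : a ∈ s) (hb : b ∈ s) (hab : a ≠ b) :
    ∃ τ : ℕ → Fin n, ∀ t ∈ s, ∀ x ∈ s, τ t = τ x → t = x ∨ (t = a ∧ x = b) ∨ (t = b ∧ x = a) := by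
  obtain ⟨σ, hσ⟩ := exists_injOn_fin (s.erase b) (n := n)
    (by rw [Finset.card_erase_of_mem hb]; omega)
  have hmem : ∀ t ∈ s, (if t = b then a else t) ∈ s.erase b := by
    intro t ht
    split_ifs with h
    · exact Finset.mem_erase.2 ⟨hab, ha⟩
    · exact Finset.mem_erase.2 ⟨h, ht⟩
  refine ⟨fun v => σ (if v = b then a else v), fun t ht x hx h => ?_⟩
  have := hσ (hmem t ht) (hmem x hx) h
  split_ifs at this <;> grind

lemma dicolourable_card_succ (D : Dgr) : D.Dicolourable (D.verts.card + 1) :=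
  let ⟨φ, hφ⟩ := exists_injOn_fin D.verts (Nat.le_succ _)
  ⟨φ, isDicol_of_injOn hφ⟩

lemma dicolourable_dichr (D : Dgr) : D.Dicolourable D.dichr :=
  Nat.sInf_mem (s := {k | D.Dicolourable k}) ⟨_, D.dicolourable_card_succ⟩

lemma dicolourable_iff_dichr_le : D.Dicolourable n ↔ D.dichr ≤ n :=
  ⟨fun h => Nat.sInf_le h, fun h => D.dicolourable_dichr.of_le h⟩

lemma dichr_le_of_hom {g : ℕ → ℕ} (hg : ∀ u v, E.Adj u v → F.Adj (g u) (g v)) :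
    E.dichr ≤ F.dichr :=
  dicolourable_iff_dichr_le.1 (F.dicolourable_dichr.of_hom hg)

lemma IsDicol.dicolourable_of_forall_ne {ψ : ℕ → Fin (m + 1)} (hψ : E.IsDicol ψ) (hm : 0 < m)
    {c : Fin (m + 1)} (hc : ∀ v ∈ E.verts, ψ v ≠ c) : E.Dicolourable m := by
  refine ⟨fun v => if h : ψ v = c then ⟨0, hm⟩ else (finSuccAboveEquiv c).symm ⟨ψ v, h⟩,
    Acy.mono hψ fun u v ⟨huv, he⟩ => ⟨huv, ?_⟩⟩
  have hu := hc u (E.adj_mem huv).1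
  have hv := hc v (E.adj_mem huv).2
  simp only [dif_neg hu, dif_neg hv] at he
  simpa using (finSuccAboveEquiv c).symm.injective he

lemma Dicolourable.exists_isDicol_ne (hE : E.Dicolourable m) (c : Fin (m + 1)) :
    ∃ ψ : ℕ → Fin (m + 1), E.IsDicol ψ ∧ ∀ v, ψ v ≠ c :=
  let ⟨φ, hφ⟩ := hE
  ⟨c.succAbove ∘ φ, Acy.mono hφ fun _ _ h => ⟨h.1, Fin.succAbove_right_injective h.2⟩,
    fun _ => Fin.succAbove_ne c _⟩

lemma Dicolourable.exists_isDicol_eq_iff {q : ℕ} (hE : (E.del q).Dicolourable m)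
    (c : Fin (m + 1)) : ∃ ψ : ℕ → Fin (m + 1), E.IsDicol ψ ∧ ∀ v, ψ v = c ↔ v = q := by
  obtain ⟨ψ, hψ, hne⟩ := hE.exists_isDicol_ne c
  have hc : ∀ v, (if v = q then c else ψ v) = c ↔ v = q := fun v => by
    by_cases hv : v = q <;> simp [hv, hne]
  refine ⟨fun v => if v = q then c else ψ v, Acy.mono hψ fun u v ⟨huv, he⟩ => ?_, hc⟩
  dsimp only at he
  have hu : u ≠ q := by
    rintro rfl
    exact E.adj_irrefl u (by rwa [(hc v).1 (he.symm.trans ((hc u).2 rfl))] at huv)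
  have hv : v ≠ q := by
    rintro rfl
    exact E.adj_irrefl v (by rwa [(hc u).1 (he.trans ((hc v).2 rfl))] at huv)
  rw [if_neg hu, if_neg hv] at he
  exact ⟨⟨huv, hu, hv⟩, he⟩

end Dicolouring

def delArc (D : Dgr) (p q : ℕ) : Dgr where
  verts := D.verts
  Adj u v := D.Adj u v ∧ ¬(u = p ∧ v = q)
  adj_mem _ _ h := D.adj_mem h.1
  adj_irrefl v h := D.adj_irrefl v h.1

def pullback (G : Dgr) (f : ℕ → ℕ) (H : Dgr) : Dgr where
  verts := G.verts.filter fun v => f v ∈ H.verts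
  Adj u v := G.Adj u v ∧ H.Adj (f u) (f v)
  adj_mem _ _ h := ⟨Finset.mem_filter.2 ⟨(G.adj_mem h.1).1, (H.adj_mem h.2).1⟩,
    Finset.mem_filter.2 ⟨(G.adj_mem h.1).2, (H.adj_mem h.2).2⟩⟩
  adj_irrefl v h := G.adj_irrefl v h.1

section Dicritical

variable {D G H : Dgr} {n : ℕ}

lemma properSubd_delArc {p q : ℕ} (h : D.Adj p q) : ProperSubd (D.delArc p q) D :=
  ⟨⟨subset_rfl, fun _ _ h => h.1⟩, fun hsub => (hsub.2 h).2 ⟨rfl, rfl⟩⟩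

lemma properSubd_del {q : ℕ} (h : q ∈ D.verts) : ProperSubd (D.del q) D :=
  ⟨⟨Finset.erase_subset _ _, fun _ _ h => h.1⟩, fun hsub => Finset.notMem_erase q _ (hsub.1 h)⟩

lemma ProperSubd.exists_adj_not_adj (hH : ProperSubd H D)
    (hcov : ∀ v ∈ D.verts, ∃ u, D.Adj v u ∨ D.Adj u v) : ∃ p q, D.Adj p q ∧ ¬ H.Adj p q := by
  by_contra! hall
  refine hH.2 ⟨fun v hv => ?_, hall⟩
  obtain ⟨u, h | h⟩ := hcov v hv
  · exact (H.adj_mem (hall _ _ h)).1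
  · exact (H.adj_mem (hall _ _ h)).2

lemma Dicritical.dicolourable (h : Dicritical n D) : D.Dicolourable n :=
  dicolourable_iff_dichr_le.2 h.1.le

lemma Dicritical.not_dicolourable (h : Dicritical (n + 1) D) : ¬ D.Dicolourable n := by
  rw [dicolourable_iff_dichr_le, h.1]
  omega

lemma Dicritical.dicolourable_of_properSubd (h : Dicritical (n + 1) D) (hH : ProperSubd H D) :
    H.Dicolourable n :=
  dicolourable_iff_dichr_le.2 (Nat.lt_succ_iff.1 (h.2 H hH))

theorem Dicritical.of_dIso (hG : Dicritical n G) (e : DIso G H) : Dicritical n H := by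
  obtain ⟨f, hf, hadj⟩ := e
  set g := Function.invFunOn f G.verts
  have hg : ∀ v ∈ H.verts, g v ∈ G.verts ∧ f (g v) = v := fun v hv =>
    Function.invFunOn_pos (hf.surjOn hv)
  have hfhom : ∀ u v, G.Adj u v → H.Adj (f u) (f v) := fun u v h =>
    (hadj u (G.adj_mem h).1 v (G.adj_mem h).2).1 h
  have hghom : ∀ u v, H.Adj u v → G.Adj (g u) (g v) ∧ f (g u) = u ∧ f (g v) = v := by
    intro u v h
    obtain ⟨⟨hu, hfu⟩, hv, hfv⟩ := And.intro (hg u (H.adj_mem h).1) (hg v (H.adj_mem h).2)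
    exact ⟨(hadj _ hu _ hv).2 (by rwa [hfu, hfv]), hfu, hfv⟩
  refine ⟨(le_antisymm (dichr_le_of_hom fun u v h => (hghom u v h).1)
    (dichr_le_of_hom hfhom)).trans hG.1, fun H' hH' => ?_⟩
  have hproper : ProperSubd (G.pullback f H') G := by
    refine ⟨⟨Finset.filter_subset _ _, fun _ _ h => h.1⟩,
      fun hsub => hH'.2 ⟨fun v hv => ?_, fun u v h => ?_⟩⟩
    · simpa [(hg v hv).2] using (Finset.mem_filter.1 (hsub.1 (hg v hv).1)).2
    · obtain ⟨hguv, hfu, hfv⟩ := hghom u v h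
      simpa [hfu, hfv] using (hsub.2 hguv).2
  calc H'.dichr ≤ (G.pullback f H').dichr := dichr_le_of_hom (g := g) fun u v h => by
        obtain ⟨hguv, hfu, hfv⟩ := hghom u v (hH'.1.2 h)
        exact ⟨hguv, by rwa [hfu, hfv]⟩
    _ < n := hG.2 _ hproper

theorem dicritical_of_dicolourable_delArc (hcol : D.Dicolourable (n + 1))
    (hnot : ¬ D.Dicolourable n) (hcov : ∀ v ∈ D.verts, ∃ u, D.Adj v u ∨ D.Adj u v)
    (hdel : ∀ p q, D.Adj p q → (D.delArc p q).Dicolourable n) : Dicritical (n + 1) D := by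
  rw [dicolourable_iff_dichr_le] at hcol hnot
  refine ⟨by omega, fun H hH => ?_⟩
  obtain ⟨p, q, hpq, hHpq⟩ := hH.exists_adj_not_adj hcov
  have hH' : H.Dicolourable n := (hdel p q hpq).of_hom (g := id) fun u v h =>
    ⟨hH.1.2 h, fun ⟨hu, hv⟩ => hHpq (hu ▸ hv ▸ h)⟩
  rw [dicolourable_iff_dichr_le] at hH'
  omega

end Dicritical

end Dgr

namespace Dgr

open Relation

structure IsArcGluing (T : Dgr) (C : ℕ → ℕ → Dgr) (D : Dgr) : Prop where
  disjoint_verts_copy : ∀ x y, T.Adj x y → Disjoint T.verts (C x y).verts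
  disjoint_copy_copy : ∀ x y x' y', T.Adj x y → T.Adj x' y' → (x, y) ≠ (x', y') →
    Disjoint (C x y).verts (C x' y').verts
  mem_verts_iff : ∀ v, v ∈ D.verts ↔ v ∈ T.verts ∨ ∃ x y, T.Adj x y ∧ v ∈ (C x y).verts
  adj_iff : ∀ u v, D.Adj u v ↔
    T.Adj u v ∨ (∃ x y, T.Adj x y ∧ (C x y).Adj u v) ∨
    (∃ x y, T.Adj x y ∧ u = y ∧ v ∈ (C x y).verts) ∨
    (∃ x y, T.Adj x y ∧ v = x ∧ u ∈ (C x y).verts)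

namespace IsArcGluing

variable {T D : Dgr} {C : ℕ → ℕ → Dgr} {t u v x y m n : ℕ}

lemma adj_of_tournament (hD : IsArcGluing T C D) (h : T.Adj u v) : D.Adj u v :=
  (hD.adj_iff u v).2 (.inl h)

lemma adj_of_copy (hD : IsArcGluing T C D) (hxy : T.Adj x y) (h : (C x y).Adj u v) :
    D.Adj u v :=
  (hD.adj_iff u v).2 (.inr (.inl ⟨x, y, hxy, h⟩))

lemma adj_into_copy (hD : IsArcGluing T C D) (hxy : T.Adj x y) (hv : v ∈ (C x y).verts) :
    D.Adj y v :=
  (hD.adj_iff y v).2 (.inr (.inr (.inl ⟨x, y, hxy, rfl, hv⟩)))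

lemma adj_out_of_copy (hD : IsArcGluing T C D) (hxy : T.Adj x y) (hv : v ∈ (C x y).verts) :
    D.Adj v x :=
  (hD.adj_iff v x).2 (.inr (.inr (.inr ⟨x, y, hxy, rfl, hv⟩)))

lemma notMem_of_mem_copy (hD : IsArcGluing T C D) (hxy : T.Adj x y) (hv : v ∈ (C x y).verts) :
    v ∉ T.verts :=
  fun h => Finset.disjoint_left.1 (hD.disjoint_verts_copy x y hxy) h hv

lemma eq_of_mem_copy {x' y' : ℕ} (hD : IsArcGluing T C D) (hxy : T.Adj x y)
    (hxy' : T.Adj x' y') (hv : v ∈ (C x y).verts) (hv' : v ∈ (C x' y').verts) :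
    x = x' ∧ y = y' := by
  by_contra h
  exact Finset.disjoint_left.1
    (hD.disjoint_copy_copy x y x' y' hxy hxy' fun he => h (Prod.mk.inj he)) hv hv'

lemma adj_of_mem_copy (hD : IsArcGluing T C D) (hxy : T.Adj x y) (hu : u ∈ (C x y).verts)
    (huv : D.Adj u v) : (C x y).Adj u v ∨ v = x := by
  rcases (hD.adj_iff u v).1 huv with h | ⟨x', y', hxy', h⟩ | ⟨x', y', hxy', rfl, -⟩ |
    ⟨x', y', hxy', rfl, hu'⟩
  · exact absurd (T.adj_mem h).1 (hD.notMem_of_mem_copy hxy hu)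
  · obtain ⟨rfl, rfl⟩ := hD.eq_of_mem_copy hxy' hxy ((C x' y').adj_mem h).1 hu
    exact .inl h
  · exact absurd (T.adj_mem hxy').2 (hD.notMem_of_mem_copy hxy hu)
  · exact .inr (hD.eq_of_mem_copy hxy' hxy hu' hu).1

lemma mem_copy_of_adj (hD : IsArcGluing T C D) (hxy : T.Adj x y) (hu : u ∈ (C x y).verts)
    (huv : D.Adj u v) (hv : v ∉ T.verts) : v ∈ (C x y).verts :=
  (hD.adj_of_mem_copy hxy hu huv).elim (fun h => ((C x y).adj_mem h).2)
    fun h => absurd (h ▸ (T.adj_mem hxy).1) hv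

lemma copy_adj (hD : IsArcGluing T C D) (hxy : T.Adj x y) (hu : u ∈ (C x y).verts)
    (hv : v ∈ (C x y).verts) (huv : D.Adj u v) : (C x y).Adj u v :=
  (hD.adj_of_mem_copy hxy hu huv).resolve_right
    fun h => hD.notMem_of_mem_copy hxy hv (h ▸ (T.adj_mem hxy).1)

lemma adj_of_mem_tournament (hD : IsArcGluing T C D) (ht : t ∈ T.verts) (htv : D.Adj t v) :
    T.Adj t v ∨ ∃ x, T.Adj x t ∧ v ∈ (C x t).verts := by
  rcases (hD.adj_iff t v).1 htv with h | ⟨x, y, hxy, h⟩ | ⟨x, y, hxy, rfl, hv⟩ |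
    ⟨x, y, hxy, rfl, ht'⟩
  · exact .inl h
  · exact absurd ht (hD.notMem_of_mem_copy hxy ((C x y).adj_mem h).1)
  · exact .inr ⟨x, hxy, hv⟩
  · exact absurd ht (hD.notMem_of_mem_copy hxy ht')

lemma tournament_adj (hD : IsArcGluing T C D) (ht : t ∈ T.verts) (hv : v ∈ T.verts)
    (htv : D.Adj t v) : T.Adj t v :=
  (hD.adj_of_mem_tournament ht htv).resolve_right
    fun ⟨_, hxt, hv'⟩ => hD.notMem_of_mem_copy hxt hv' hv

lemma exists_adj (hD : IsArcGluing T C D) (hT : T.IsTournament) (hTk : 2 ≤ T.verts.card)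
    (hv : v ∈ D.verts) : ∃ u, D.Adj v u ∨ D.Adj u v := by
  rcases (hD.mem_verts_iff v).1 hv with hvT | ⟨x, y, hxy, hvC⟩
  · obtain ⟨u, hu, hne⟩ := Finset.exists_mem_ne (by omega : 1 < T.verts.card) v
    rcases hT.2 u hu v hvT hne with h | h
    · exact ⟨u, .inr (hD.adj_of_tournament h)⟩
    · exact ⟨u, .inl (hD.adj_of_tournament h)⟩
  · exact ⟨x, .inl (hD.adj_out_of_copy hxy hvC)⟩

variable {r : ℕ → ℕ → Prop}

/-- A path avoiding `T` can leave the copy `C x t` only through `x`. -/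
lemma skeleton_cases (hD : IsArcGluing T C D) (hr : ∀ u v, r u v → D.Adj u v)
    (h : skeleton T.verts r t x) :
    (T.Adj t x ∧ r t x) ∨
      (T.Adj x t ∧ (∃ w ∈ (C x t).verts, r t w) ∧ ∃ w ∈ (C x t).verts, r w x) := by
  obtain ⟨ht, hx, a, hta, hax⟩ := h
  rcases hta.cases_head with rfl | ⟨w, ⟨htw, hw⟩, hwa⟩
  · exact .inl ⟨hD.tournament_adj ht hx (hr _ _ hax), hax⟩
  obtain ⟨x', hx't, hw'⟩ := (hD.adj_of_mem_tournament ht (hr _ _ htw)).resolve_left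
    fun h => hw (T.adj_mem h).2
  have ha : a ∈ (C x' t).verts :=
    mem_of_reflTransGen (fun _ _ h hb => hD.mem_copy_of_adj hx't hb (hr _ _ h.1) h.2) hwa hw'
  obtain rfl : x = x' := (hD.adj_of_mem_copy hx't ha (hr _ _ hax)).resolve_left
    fun h => hD.notMem_of_mem_copy hx't ((C x' t).adj_mem h).2 hx
  exact .inr ⟨hx't, ⟨w, hw', htw⟩, a, ha, hax⟩

lemma ne_of_skeleton (hD : IsArcGluing T C D) (hr : ∀ u v, r u v → D.Adj u v)
    (h : skeleton T.verts r t x) : t ≠ x := by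
  rintro rfl
  rcases hD.skeleton_cases hr h with ⟨h, -⟩ | ⟨h, -⟩ <;> exact T.adj_irrefl t h

/-- A cycle avoiding `T` stays inside one copy. -/
theorem acy_of_acy_copy (hD : IsArcGluing T C D) (hr : ∀ u v, r u v → D.Adj u v)
    (hcopy : ∀ x y, T.Adj x y →
      Acy (fun u v => r u v ∧ u ∈ (C x y).verts ∧ v ∈ (C x y).verts))
    (hskel : Acy (skeleton T.verts r)) : Acy r := by
  refine Acy.of_skeleton T.verts (fun v hv => ?_) hskel
  obtain ⟨w, ⟨hvw, hvT, -⟩, -⟩ := TransGen.head'_iff.1 hv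
  rcases (hD.mem_verts_iff v).1 (D.adj_mem (hr _ _ hvw)).1 with hvT' | ⟨x, y, hxy, hvC⟩
  · exact hvT hvT'
  · refine hcopy x y hxy v (TransGen.mono (fun _ _ h => ⟨h.1.1, h.2⟩) _ _
      (transGen_restrict_of_forall_mem (fun _ _ h ha => ?_) hv hvC))
    exact hD.mem_copy_of_adj hxy ha (hr _ _ h.1) h.2.2

lemma exists_glue {α : Type*} (hD : IsArcGluing T C D) (τ : ℕ → α) (Ψ : ℕ → ℕ → ℕ → α) :
    ∃ φ : ℕ → α, (∀ v ∈ T.verts, φ v = τ v) ∧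
      ∀ x y, T.Adj x y → ∀ v ∈ (C x y).verts, φ v = Ψ x y v := by
  classical
  refine ⟨fun v => if h : ∃ e : ℕ × ℕ, T.Adj e.1 e.2 ∧ v ∈ (C e.1 e.2).verts
    then Ψ h.choose.1 h.choose.2 v else τ v, fun v hv => ?_, fun x y hxy v hv => ?_⟩
  · refine dif_neg ?_
    rintro ⟨e, he, hve⟩
    exact hD.notMem_of_mem_copy he hve hv
  · have h : ∃ e : ℕ × ℕ, T.Adj e.1 e.2 ∧ v ∈ (C e.1 e.2).verts := ⟨(x, y), hxy, hv⟩
    obtain ⟨hx, hy⟩ := hD.eq_of_mem_copy h.choose_spec.1 hxy h.choose_spec.2 hv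
    exact (dif_pos h).trans (by rw [hx, hy])

theorem dicolourable [NeZero n] (hD : IsArcGluing T C D) (hTn : T.verts.card ≤ n)
    (hC : ∀ x y, T.Adj x y → (C x y).Dicolourable n) : D.Dicolourable n := by
  obtain ⟨τ, hτ⟩ := exists_injOn_fin T.verts hTn
  choose! Ψ hΨ using hC
  obtain ⟨φ, hφT, hφC⟩ := hD.exists_glue τ Ψ
  refine ⟨φ, hD.acy_of_acy_copy (fun _ _ h => h.1) (fun x y hxy => ?_) ?_⟩
  · refine Acy.mono (hΨ x y hxy) fun u v ⟨⟨huv, he⟩, hu, hv⟩ => ⟨hD.copy_adj hxy hu hv huv, ?_⟩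
    rwa [← hφC x y hxy u hu, ← hφC x y hxy v hv]
  · refine acy_of_forall_not fun t x h => hD.ne_of_skeleton (fun _ _ h => h.1) h (hτ h.1 h.2.1 ?_)
    rw [← hφT t h.1, ← hφT x h.2.1]
    exact eq_of_transGen (fun _ _ h => h.2) (transGen_of_skeleton h)

theorem not_dicolourable (hD : IsArcGluing T C D) (hT : T.IsTournament) (hm : 0 < m)
    (hTm : m + 1 < T.verts.card) (hC : ∀ x y, T.Adj x y → ¬ (C x y).Dicolourable m) :
    ¬ D.Dicolourable (m + 1) := by
  rintro ⟨φ, hφ⟩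
  have hne : ∀ x y, T.Adj x y → φ x ≠ φ y := by
    intro x y hxy hxy'
    obtain ⟨w, hw, hwx⟩ : ∃ w ∈ (C x y).verts, φ w = φ x := by
      by_contra! h
      exact hC x y hxy ((hφ.mono fun _ _ => hD.adj_of_copy hxy).dicolourable_of_forall_ne hm h)
    exact hφ x (.head ⟨hD.adj_of_tournament hxy, hxy'⟩
      (.head ⟨hD.adj_into_copy hxy hw, hxy'.symm.trans hwx.symm⟩
        (.single ⟨hD.adj_out_of_copy hxy hw, hwx⟩)))
  have hinj : Set.InjOn φ T.verts := by
    intro u hu v hv huv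
    by_contra h
    rcases hT.2 u hu v hv h with h' | h'
    · exact hne u v h' huv
    · exact hne v u h' huv.symm
  have := Finset.card_le_card_of_injOn φ (fun _ _ => Finset.mem_coe.2 (Finset.mem_univ _)) hinj
  simp only [Finset.card_univ, Fintype.card_fin] at this
  omega

/-- The only possible monochromatic cycle runs `x₀ → y₀ ⇝ C x₀ y₀ ⇝ x₀`, and `hcrit` says
that it uses `pq`. -/
theorem dicolourable_delArc_of_colouring {x₀ y₀ p q : ℕ} (hD : IsArcGluing T C D)
    (hTo : T.Oriented) (h₀ : T.Adj x₀ y₀) (τ : ℕ → Fin n)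
    (hτ : ∀ t ∈ T.verts, ∀ x ∈ T.verts, τ t = τ x → t = x ∨ (t = x₀ ∧ x = y₀) ∨ (t = y₀ ∧ x = x₀))
    (Ψ : ℕ → ℕ → ℕ → Fin n) (hΨ : ∀ x y, T.Adj x y → ((C x y).delArc p q).IsDicol (Ψ x y))
    (hcrit : ∀ w ∈ (C x₀ y₀).verts, ∀ w' ∈ (C x₀ y₀).verts, Ψ x₀ y₀ w = τ x₀ →
      Ψ x₀ y₀ w' = τ x₀ → (p = x₀ ∧ q = y₀) ∨ (p = y₀ ∧ q = w) ∨ (p = w' ∧ q = x₀)) :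
    (D.delArc p q).Dicolourable n := by
  obtain ⟨φ, hφT, hφC⟩ := hD.exists_glue τ Ψ
  set r := fun u v => (D.delArc p q).Adj u v ∧ φ u = φ v
  have hr : ∀ u v, r u v → D.Adj u v := fun _ _ h => h.1.1
  have hstep : ∀ t x, skeleton T.verts r t x → (t = x₀ ∧ x = y₀) ∨ (t = y₀ ∧ x = x₀) := by
    intro t x h
    refine (hτ t h.1 x h.2.1 ?_).resolve_left (hD.ne_of_skeleton hr h)
    rw [← hφT t h.1, ← hφT x h.2.1]
    exact eq_of_transGen (fun _ _ h => h.2) (transGen_of_skeleton h)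
  have hnot : ¬ (skeleton T.verts r x₀ y₀ ∧ skeleton T.verts r y₀ x₀) := by
    rintro ⟨h₁, h₂⟩
    obtain ⟨-, hxy⟩ := (hD.skeleton_cases hr h₁).resolve_right fun h => hTo h₀ h.1
    obtain ⟨-, ⟨w, hw, hyw⟩, w', hw', hwx⟩ :=
      (hD.skeleton_cases hr h₂).resolve_left fun h => hTo h₀ h.1
    have hcw : Ψ x₀ y₀ w = τ x₀ := by
      rw [← hφC _ _ h₀ w hw, ← hφT x₀ (T.adj_mem h₀).1]
      exact (hxy.2.trans hyw.2).symm
    have hcw' : Ψ x₀ y₀ w' = τ x₀ := by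
      rw [← hφC _ _ h₀ w' hw', ← hφT x₀ (T.adj_mem h₀).1]
      exact hwx.2
    rcases hcrit w hw w' hw' hcw hcw' with ⟨rfl, rfl⟩ | ⟨rfl, rfl⟩ | ⟨rfl, rfl⟩
    · exact hxy.1.2 ⟨rfl, rfl⟩
    · exact hyw.1.2 ⟨rfl, rfl⟩
    · exact hwx.1.2 ⟨rfl, rfl⟩
  refine ⟨φ, hD.acy_of_acy_copy hr (fun x y hxy => ?_) ?_⟩
  · refine Acy.mono (hΨ x y hxy) fun u v ⟨⟨huv, he⟩, hu, hv⟩ =>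
      ⟨⟨hD.copy_adj hxy hu hv huv.1, huv.2⟩, ?_⟩
    rwa [← hφC x y hxy u hu, ← hφC x y hxy v hv]
  · have hx₀y₀ : x₀ ≠ y₀ := fun h => T.adj_irrefl _ (h ▸ h₀)
    by_cases h₁ : skeleton T.verts r x₀ y₀
    · exact acy_of_forall_eq hx₀y₀ fun t x h =>
        (hstep t x h).resolve_right fun ⟨ht, hx⟩ => hnot ⟨h₁, ht ▸ hx ▸ h⟩
    · exact acy_of_forall_eq hx₀y₀.symm fun t x h =>
        (hstep t x h).resolve_left fun ⟨ht, hx⟩ => h₁ (ht ▸ hx ▸ h)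

theorem dicolourable_delArc_of_copy {x₀ y₀ p q : ℕ} (hD : IsArcGluing T C D)
    (hTo : T.Oriented) (hTm : T.verts.card = m + 2)
    (hC : ∀ x y, T.Adj x y → (C x y).Dicolourable (m + 1)) (h₀ : T.Adj x₀ y₀)
    (hψ₀ : ∀ c : Fin (m + 1), ∃ ψ₀ : ℕ → Fin (m + 1), ((C x₀ y₀).delArc p q).IsDicol ψ₀ ∧
      ∀ w ∈ (C x₀ y₀).verts, ∀ w' ∈ (C x₀ y₀).verts, ψ₀ w = c → ψ₀ w' = c →
        (p = x₀ ∧ q = y₀) ∨ (p = y₀ ∧ q = w) ∨ (p = w' ∧ q = x₀)) :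
    (D.delArc p q).Dicolourable (m + 1) := by
  obtain ⟨τ, hτ⟩ := exists_fin_identifying T.verts (n := m + 1) hTm.le (T.adj_mem h₀).1
    (T.adj_mem h₀).2 fun h => T.adj_irrefl _ (h ▸ h₀)
  obtain ⟨ψ₀, hψ₀, hcrit⟩ := hψ₀ (τ x₀)
  choose! Ψ hΨ using hC
  refine hD.dicolourable_delArc_of_colouring hTo h₀ τ hτ
    (fun x y => if x = x₀ ∧ y = y₀ then ψ₀ else Ψ x y) (fun x y hxy => ?_) ?_
  · split_ifs with h
    · obtain ⟨rfl, rfl⟩ := h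
      exact hψ₀
    · exact (hΨ x y hxy).mono fun _ _ h => h.1
  · simpa only [and_self, if_true] using hcrit

theorem dicolourable_delArc {p q : ℕ} (hD : IsArcGluing T C D) (hTo : T.Oriented)
    (hTm : T.verts.card = m + 2) (hC : ∀ x y, T.Adj x y → Dicritical (m + 1) (C x y))
    (hpq : D.Adj p q) : (D.delArc p q).Dicolourable (m + 1) := by
  have hcol : ∀ x y, T.Adj x y → (C x y).Dicolourable (m + 1) := fun x y hxy =>
    (hC x y hxy).dicolourable
  rcases (hD.adj_iff p q).1 hpq with hpq | ⟨x, y, hxy, hpq⟩ | ⟨x, y, hxy, hpy, hq⟩ |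
    ⟨x, y, hxy, hqx, hp⟩
  · refine hD.dicolourable_delArc_of_copy hTo hTm hcol hpq fun _ => ?_
    obtain ⟨ψ, hψ⟩ := hcol p q hpq
    exact ⟨ψ, hψ.mono fun _ _ h => h.1, fun _ _ _ _ _ _ => .inl ⟨rfl, rfl⟩⟩
  · refine hD.dicolourable_delArc_of_copy hTo hTm hcol hxy fun c => ?_
    obtain ⟨ψ, hψ, hψc⟩ :=
      ((hC x y hxy).dicolourable_of_properSubd (properSubd_delArc hpq)).exists_isDicol_ne c
    exact ⟨ψ, hψ, fun w _ _ _ hw => absurd hw (hψc w)⟩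
  · subst p
    refine hD.dicolourable_delArc_of_copy hTo hTm hcol hxy fun c => ?_
    obtain ⟨ψ, hψ, hψc⟩ :=
      ((hC x y hxy).dicolourable_of_properSubd (properSubd_del hq)).exists_isDicol_eq_iff c
    exact ⟨ψ, hψ.mono fun _ _ h => h.1,
      fun w _ _ _ hw _ => .inr (.inl ⟨rfl, ((hψc w).1 hw).symm⟩)⟩
  · subst q
    refine hD.dicolourable_delArc_of_copy hTo hTm hcol hxy fun c => ?_
    obtain ⟨ψ, hψ, hψc⟩ :=
      ((hC x y hxy).dicolourable_of_properSubd (properSubd_del hp)).exists_isDicol_eq_iff c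
    exact ⟨ψ, hψ.mono fun _ _ h => h.1,
      fun _ _ w' _ _ hw' => .inr (.inr ⟨((hψc w').1 hw').symm, rfl⟩)⟩

end IsArcGluing

end Dgr

theorem stmt_19_general (k : ℕ) (hk : 4 ≤ k) (T G D : Dgr) (C : ℕ → ℕ → Dgr)
    (hT : T.IsTournament) (hTk : T.verts.card = k)
    (hGcrit : Dgr.Dicritical (k - 1) G)
    (hcopy : ∀ x y, T.Adj x y → Dgr.DIso G (C x y))
    (hdisjT : ∀ x y, T.Adj x y → Disjoint T.verts (C x y).verts)
    (hdisjC : ∀ x y x' y', T.Adj x y → T.Adj x' y' → (x, y) ≠ (x', y') →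
      Disjoint (C x y).verts (C x' y').verts)
    (hverts : ∀ v, v ∈ D.verts ↔ v ∈ T.verts ∨ ∃ x y, T.Adj x y ∧ v ∈ (C x y).verts)
    (hadj : ∀ u v, D.Adj u v ↔
      T.Adj u v ∨ (∃ x y, T.Adj x y ∧ (C x y).Adj u v) ∨
      (∃ x y, T.Adj x y ∧ u = y ∧ v ∈ (C x y).verts) ∨
      (∃ x y, T.Adj x y ∧ v = x ∧ u ∈ (C x y).verts)) :
    Dgr.Dicritical k D := by
  obtain ⟨m, rfl⟩ : ∃ m, k = m + 2 := ⟨k - 2, by omega⟩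
  have hD : IsArcGluing T C D := ⟨hdisjT, hdisjC, hverts, hadj⟩
  have hC : ∀ x y, T.Adj x y → Dicritical (m + 1) (C x y) := fun x y hxy =>
    hGcrit.of_dIso (hcopy x y hxy)
  exact dicritical_of_dicolourable_delArc
    (hD.dicolourable hTk.le fun x y hxy => (hC x y hxy).dicolourable.of_le (by omega))
    (hD.not_dicolourable hT (by omega) (by omega) fun x y hxy => (hC x y hxy).not_dicolourable)
    (fun v hv => hD.exists_adj hT (by omega) hv)
    (fun p q hpq => hD.dicolourable_delArc hT.1 hTk hC hpq)

/-- the digraph obtained from a tournament `T` on `k ≥ 4` vertices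
by adding, for each arc `xy` of `T`, a disjoint copy `C x y` of a fixed
`(k−1)`-dicritical oriented graph `G` together with all arcs from `y` to the
copy and from the copy to `x`, is `k`-dicritical. -/
theorem stmt_19 (k : ℕ) (hk : 4 ≤ k) (T G D : Dgr) (C : ℕ → ℕ → Dgr)
    (hT : T.IsTournament) (hTk : T.verts.card = k)
    (hG : G.Oriented) (hGcrit : Dgr.Dicritical (k - 1) G)
    (hcopy : ∀ x y, T.Adj x y → Dgr.DIso G (C x y))
    (hdisjT : ∀ x y, T.Adj x y → Disjoint T.verts (C x y).verts)
    (hdisjC : ∀ x y x' y', T.Adj x y → T.Adj x' y' → (x, y) ≠ (x', y') →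
      Disjoint (C x y).verts (C x' y').verts)
    (hverts : ∀ v, v ∈ D.verts ↔ v ∈ T.verts ∨ ∃ x y, T.Adj x y ∧ v ∈ (C x y).verts)
    (hadj : ∀ u v, D.Adj u v ↔
      T.Adj u v ∨ (∃ x y, T.Adj x y ∧ (C x y).Adj u v) ∨
      (∃ x y, T.Adj x y ∧ u = y ∧ v ∈ (C x y).verts) ∨
      (∃ x y, T.Adj x y ∧ v = x ∧ u ∈ (C x y).verts)) :
    Dgr.Dicritical k D :=
  stmt_19_general k hk T G D C hT hTk hGcrit hcopy hdisjT hdisjC hverts hadj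
end
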